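/- arXiv:0801.3552 — 9 statements merged into one kernel-verified Lean document; each statement's English description precedes it below -/
import Mathlib

section
/- Let m and k be positive integers and let y_1, ..., y_m ∈ (0,1). Then the equation log(∏_{j=1}^m y_j) + ∑_{i=1}^k m/(c - i + 1) = 0 has a unique root c in the interval (k-1, ∞): the function c ↦ ∑_{j=1}^m log y_j + ∑_{i=1}^k m/(c - i + 1) is strictly decreasing on (k-1, ∞), tends to +∞ as c → (k-1)^+, tends to ∑_{j=1}^m log y_j < 0 as c → ∞, and therefore has exactly one zero on this interval. -/
/-!
Each term `m / (c - i + 1)` is positive and strictly decreasing on `(k - 1, ∞)`, the term with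
`i = k` blows up as `c → (k - 1)⁺`, and all of them vanish at infinity, while `∑ log y_j < 0`
because every `y_j < 1`. A continuous strictly decreasing function going from `+∞` down to a
negative limit crosses zero exactly once, by the intermediate value theorem.
-/

open Filter Set Topology

theorem StrictAntiOn.existsUnique_eq_of_tendsto {α β : Type*} [ConditionallyCompleteLinearOrder α]
    [TopologicalSpace α] [OrderTopology α] [DenselyOrdered α] [NoMaxOrder α]
    [LinearOrder β] [TopologicalSpace β] [OrderClosedTopology β] {f : α → β} {a : α} {L y : β}
    (hanti : StrictAntiOn f (Ioi a)) (hcont : ContinuousOn f (Ioi a))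
    (hleft : Tendsto f (𝓝[>] a) atTop) (hright : Tendsto f atTop (𝓝 L)) (hy : L < y) :
    ∃! c, c ∈ Ioi a ∧ f c = y := by
  obtain ⟨c, hc, hfc⟩ := isPreconnected_Ioi.intermediate_value_Ioi (l₂ := 𝓝[>] a)
    (tendsto_principal.2 (eventually_gt_atTop a)) inf_le_right hcont hright hleft hy
  exact ⟨c, ⟨hc, hfc⟩, fun c' ⟨hc', hfc'⟩ => hanti.injOn hc' hc (hfc'.trans hfc.symm)⟩

theorem Real.sum_log_neg {ι : Type*} [Fintype ι] [Nonempty ι] {y : ι → ℝ}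
    (hy : ∀ j, y j ∈ Ioo 0 1) : ∑ j, Real.log (y j) < 0 :=
  Finset.sum_neg (fun j _ => Real.log_neg (hy j).1 (hy j).2) Finset.univ_nonempty

section ScoreSum

variable {a : ℝ} {k : ℕ}

lemma sub_natCast_add_one_pos {c : ℝ} {i : ℕ} (hc : c ∈ Ioi ((k : ℝ) - 1))
    (hi : i ∈ Finset.Icc 1 k) : 0 < c - i + 1 := by
  have : (i : ℝ) ≤ k := by exact_mod_cast (Finset.mem_Icc.1 hi).2
  linarith [mem_Ioi.1 hc]

lemma strictAntiOn_sum_div_sub_add_one (ha : 0 < a) (hk : 0 < k) :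
    StrictAntiOn (fun c : ℝ => ∑ i ∈ Finset.Icc 1 k, a / (c - i + 1)) (Ioi ((k : ℝ) - 1)) :=
  fun _ hc _ hd hcd => Finset.sum_lt_sum_of_nonempty (Finset.nonempty_Icc.2 hk) fun i hi =>
    div_lt_div_of_pos_left ha (sub_natCast_add_one_pos hc hi) (by linarith)

lemma continuousOn_sum_div_sub_add_one :
    ContinuousOn (fun c : ℝ => ∑ i ∈ Finset.Icc 1 k, a / (c - i + 1)) (Ioi ((k : ℝ) - 1)) :=
  continuousOn_finsetSum _ fun i hi => continuousOn_const.div (by fun_prop)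
    fun _ hc => (sub_natCast_add_one_pos hc hi).ne'

lemma tendsto_sum_div_sub_add_one_nhdsGT (ha : 0 < a) (hk : 0 < k) :
    Tendsto (fun c : ℝ => ∑ i ∈ Finset.Icc 1 k, a / (c - i + 1)) (𝓝[>] ((k : ℝ) - 1)) atTop := by
  have hlast : Tendsto (fun c : ℝ => a / (c - k + 1)) (𝓝[>] ((k : ℝ) - 1)) atTop := by
    have hden : Tendsto (fun c : ℝ => c - k + 1) (𝓝[>] ((k : ℝ) - 1)) (𝓝[>] 0) := by
      refine tendsto_nhdsWithin_iff.2 ⟨?_, ?_⟩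
      · exact ((show Continuous fun c : ℝ => c - k + 1 by fun_prop).tendsto' _ _
          (by ring)).mono_left nhdsWithin_le_nhds
      · filter_upwards [self_mem_nhdsWithin] with c hc
        simp only [mem_Ioi] at hc ⊢
        linarith
    simpa [div_eq_mul_inv] using (tendsto_inv_nhdsGT_zero.comp hden).const_mul_atTop ha
  refine tendsto_atTop_mono' _ ?_ hlast
  filter_upwards [self_mem_nhdsWithin] with c hc
  exact Finset.single_le_sum (fun i hi => (div_pos ha (sub_natCast_add_one_pos hc hi)).le)
    (Finset.mem_Icc.2 ⟨hk, le_rfl⟩)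

lemma tendsto_sum_div_sub_add_one_atTop :
    Tendsto (fun c : ℝ => ∑ i ∈ Finset.Icc 1 k, a / (c - i + 1)) atTop (𝓝 0) := by
  simpa [sub_eq_add_neg] using tendsto_finsetSum (Finset.Icc 1 k) fun (i : ℕ) _ =>
    tendsto_const_nhds.div_atTop
      (tendsto_atTop_add_const_right _ 1 (tendsto_atTop_add_const_right _ (-(i : ℝ)) tendsto_id))

end ScoreSum

/-- The score equation for the `k`-th order statistic sketch: on `(k-1, ∞)` the function
`c ↦ ∑ j, log (y j) + ∑_{i=1}^k m / (c - i + 1)` is strictly decreasing, tends to `+∞` as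
`c → (k-1)⁺`, tends to `∑ j, log (y j) < 0` as `c → ∞`, and has a unique zero. -/
theorem score_equation_unique_root (m k : ℕ) (hm : 0 < m) (hk : 0 < k)
    (y : Fin m → ℝ) (hy : ∀ j, y j ∈ Set.Ioo (0 : ℝ) 1) :
    StrictAntiOn
      (fun c : ℝ => (∑ j, Real.log (y j)) + ∑ i ∈ Finset.Icc 1 k, (m : ℝ) / (c - (i : ℝ) + 1))
      (Set.Ioi ((k : ℝ) - 1)) ∧
    Tendsto
      (fun c : ℝ => (∑ j, Real.log (y j)) + ∑ i ∈ Finset.Icc 1 k, (m : ℝ) / (c - (i : ℝ) + 1))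
      (nhdsWithin ((k : ℝ) - 1) (Set.Ioi ((k : ℝ) - 1))) atTop ∧
    Tendsto
      (fun c : ℝ => (∑ j, Real.log (y j)) + ∑ i ∈ Finset.Icc 1 k, (m : ℝ) / (c - (i : ℝ) + 1))
      atTop (nhds (∑ j, Real.log (y j))) ∧
    (∑ j, Real.log (y j)) < 0 ∧
    (∃! c : ℝ, c ∈ Set.Ioi ((k : ℝ) - 1) ∧
      (∑ j, Real.log (y j)) + ∑ i ∈ Finset.Icc 1 k, (m : ℝ) / (c - (i : ℝ) + 1) = 0) := by
  have hm' : (0 : ℝ) < m := Nat.cast_pos.2 hm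
  have : Nonempty (Fin m) := ⟨⟨0, hm⟩⟩
  have hanti : StrictAntiOn (fun c : ℝ => (∑ j, Real.log (y j)) +
      ∑ i ∈ Finset.Icc 1 k, (m : ℝ) / (c - (i : ℝ) + 1)) (Ioi ((k : ℝ) - 1)) :=
    fun _ hc _ hd hcd =>
      (add_lt_add_iff_left _).2 (strictAntiOn_sum_div_sub_add_one hm' hk hc hd hcd)
  have hleft := tendsto_atTop_add_const_left _ (∑ j, Real.log (y j))
    (tendsto_sum_div_sub_add_one_nhdsGT hm' hk)
  have hright : Tendsto (fun c : ℝ => (∑ j, Real.log (y j)) +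
      ∑ i ∈ Finset.Icc 1 k, (m : ℝ) / (c - (i : ℝ) + 1)) atTop (𝓝 (∑ j, Real.log (y j))) := by
    simpa using tendsto_sum_div_sub_add_one_atTop.const_add (∑ j, Real.log (y j))
  have hneg := Real.sum_log_neg hy
  exact ⟨hanti, hleft, hright, hneg, hanti.existsUnique_eq_of_tendsto
    (continuousOn_const.add continuousOn_sum_div_sub_add_one) hleft hright hneg⟩
end

section
/- Let q ∈ (0,1), let c > 0, and consider a Bernoulli random variable Y with success probability P(c) = 1 - q^c. Then the Fisher information for the parameter c from one such observation, I(c) = (P'(c))² / (P(c)(1 - P(c))), equals q^c·(log q)² / (1 - q^c). Moreover, substituting q = exp(-λ/c) for λ > 0 gives I(c) = λ² / (c²·(e^λ - 1)), so that the ratio of this Fisher information to the Fisher information 1/c² obtained from a continuous hash function equals λ²/(e^λ - 1). -/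
/-! Since `d/dc (1 - q^c) = -q^c log q`, the Fisher information is
`q^(2c) (log q)² / ((1 - q^c) q^c) = q^c (log q)² / (1 - q^c)`. At `q = exp (-λ/c)` we have
`q^c = e^(-λ)` and `log q = -λ/c`; multiplying numerator and denominator by `e^λ` gives
`λ² / (c² (e^λ - 1))`, which is `λ² / (e^λ - 1)` times the continuous-hash information `1/c²`. -/

open Real

noncomputable section

def bernoulliFisherInfo (P : ℝ → ℝ) (c : ℝ) : ℝ :=
  deriv P c ^ 2 / (P c * (1 - P c))

def bernoulliHashFisherInfo (q c : ℝ) : ℝ :=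
  q ^ c * log q ^ 2 / (1 - q ^ c)

end

theorem hasDerivAt_one_sub_const_rpow {q : ℝ} (hq : 0 < q) (c : ℝ) :
    HasDerivAt (fun c : ℝ => 1 - q ^ c) (-(q ^ c * log q)) c :=
  (hasStrictDerivAt_const_rpow hq c).hasDerivAt.const_sub 1

theorem bernoulliFisherInfo_one_sub_const_rpow {q : ℝ} (hq : 0 < q) (c : ℝ) :
    bernoulliFisherInfo (fun c : ℝ => 1 - q ^ c) c = bernoulliHashFisherInfo q c := by
  have hqc : q ^ c ≠ 0 := (rpow_pos_of_pos hq c).ne'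
  rw [bernoulliFisherInfo, bernoulliHashFisherInfo, (hasDerivAt_one_sub_const_rpow hq c).deriv,
    sub_sub_cancel, neg_sq, mul_pow, sq (q ^ c), mul_comm (1 - q ^ c), mul_assoc,
    mul_div_mul_left _ _ hqc]

theorem bernoulliHashFisherInfo_exp_neg_div {c : ℝ} (hc : c ≠ 0) (l : ℝ) :
    bernoulliHashFisherInfo (exp (-l / c)) c = l ^ 2 / (c ^ 2 * (exp l - 1)) := by
  have hpow : exp (-l / c) ^ c = exp (-l) := by
    rw [← exp_mul, div_mul_cancel₀ _ hc]
  rw [bernoulliHashFisherInfo, hpow, log_exp, ← mul_div_mul_right _ _ (exp_pos l).ne', exp_neg]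
  field_simp

/-- Fisher information for Bernoulli hashing: for `q ∈ (0,1)` and `c > 0`, with success
probability `P(c) = 1 - q ^ c`, the Fisher information `(P'(c))² / (P(c)(1 - P(c)))` equals
`q ^ c * (log q)² / (1 - q ^ c)`; substituting `q = exp (-λ/c)` gives `λ² / (c² (e^λ - 1))`,
whose ratio to the continuous-hashing information `1/c²` is `λ² / (e^λ - 1)`. -/
theorem bernoulli_fisher_information (q : ℝ) (hq : q ∈ Set.Ioo (0 : ℝ) 1)
    (c : ℝ) (hc : 0 < c) :
    (deriv (fun c : ℝ => 1 - q ^ c) c) ^ 2 / ((1 - q ^ c) * (1 - (1 - q ^ c))) =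
      q ^ c * (Real.log q) ^ 2 / (1 - q ^ c) ∧
    (∀ l : ℝ, 0 < l →
      (Real.exp (-l / c)) ^ c * (Real.log (Real.exp (-l / c))) ^ 2 /
          (1 - (Real.exp (-l / c)) ^ c) =
        l ^ 2 / (c ^ 2 * (Real.exp l - 1)) ∧
      ((Real.exp (-l / c)) ^ c * (Real.log (Real.exp (-l / c))) ^ 2 /
          (1 - (Real.exp (-l / c)) ^ c)) / (1 / c ^ 2) =
        l ^ 2 / (Real.exp l - 1)) := by
  refine ⟨bernoulliFisherInfo_one_sub_const_rpow hq.1 c, fun l _ => ?_⟩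
  have hinfo := bernoulliHashFisherInfo_exp_neg_div hc.ne' l
  rw [bernoulliHashFisherInfo] at hinfo
  refine ⟨hinfo, ?_⟩
  rw [hinfo]
  field_simp
end

section
/- The equation λ = 2·(1 - e^{-λ}) has a unique positive root λ_0 (numerically λ_0 ≈ 1.594, expressible as λ_0 = 2 + W(-2e^{-2}) where W is Lambert's function), and the function g(λ) = λ²/(e^λ - 1) attains its unique global maximum on (0,∞) at λ = λ_0. -/
/-!
With `h(λ) = 2 (1 - e^{-λ}) - λ` one has `g'(λ) = λ e^λ h(λ) / (e^λ - 1)²`. The function `h` is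
strictly concave (because `e^{-λ}` is strictly convex) and vanishes at `0`; since `h(1) > 0 > h(2)`
it has a positive zero `λ₀`, and concavity forces `h > 0` on `(0, λ₀)` and `h < 0` on `(λ₀, ∞)`.
So `λ₀` is the only positive zero, and `g` increases strictly up to `λ₀` and decreases strictly
after it.
-/

open Real Set

section StrictConcave

variable {𝕜 : Type*} [Field 𝕜] [LinearOrder 𝕜] [IsStrictOrderedRing 𝕜] {s : Set 𝕜} {f : 𝕜 → 𝕜}
  {a b c : 𝕜}

theorem StrictConcaveOn.pos_of_mem_Ioo (hf : StrictConcaveOn 𝕜 s f) (ha : a ∈ s) (hb : b ∈ s)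
    (hfa : f a = 0) (hfb : f b = 0) (hc : c ∈ Ioo a b) : 0 < f c := by
  simpa [hfa, hfb] using
    hf.lt_on_openSegment ha hb (hc.1.trans hc.2).ne (openSegment_eq_Ioo (hc.1.trans hc.2) ▸ hc)

theorem StrictConcaveOn.neg_of_lt (hf : StrictConcaveOn 𝕜 s f) (ha : a ∈ s) (hc : c ∈ s)
    (hfa : f a = 0) (hfb : f b = 0) (hab : a < b) (hbc : b < c) : f c < 0 := by
  simpa [hfa, hfb] using hf.lt_on_openSegment ha hc (hab.trans hbc).ne
    (openSegment_eq_Ioo (hab.trans hbc) ▸ ⟨hab, hbc⟩ : b ∈ openSegment 𝕜 a c)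

end StrictConcave

theorem strictConvexOn_exp_neg : StrictConvexOn ℝ univ fun x => exp (-x) := by
  refine ⟨convex_univ, fun x _ y _ hxy a b ha hb hab => ?_⟩
  have := strictConvexOn_exp.2 (mem_univ (-x)) (mem_univ (-y)) (neg_injective.ne hxy) ha hb hab
  simpa only [smul_eq_mul, mul_neg, neg_add] using this

noncomputable def stationarityGap (l : ℝ) : ℝ := 2 * (1 - exp (-l)) - l

theorem strictConcaveOn_stationarityGap : StrictConcaveOn ℝ univ stationarityGap := by
  refine ⟨convex_univ, fun x _ y _ hxy a b ha hb hab => ?_⟩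
  have := strictConvexOn_exp_neg.2 (mem_univ x) (mem_univ y) hxy ha hb hab
  simp only [stationarityGap, smul_eq_mul] at this ⊢
  linear_combination 2 * this + 2 * hab

theorem stationarityGap_eq_zero_iff (l : ℝ) : stationarityGap l = 0 ↔ l = 2 * (1 - exp (-l)) := by
  rw [stationarityGap, sub_eq_zero, eq_comm]

theorem stationarityGap_zero : stationarityGap 0 = 0 := by simp [stationarityGap]

theorem exists_pos_stationarityGap_eq_zero : ∃ l₀, 0 < l₀ ∧ stationarityGap l₀ = 0 := by
  have h₁ : 0 < stationarityGap 1 := by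
    have : exp (-1) < 1 / 2 := by
      rw [exp_neg, inv_lt_comm₀ (exp_pos 1) one_half_pos]
      linarith [exp_one_gt_d9]
    simp only [stationarityGap]
    linarith
  have h₂ : stationarityGap 2 < 0 := by
    simp only [stationarityGap]
    linarith [exp_pos (-2)]
  have hcont : ContinuousOn stationarityGap (Icc 1 2) := by
    unfold stationarityGap; fun_prop
  obtain ⟨l₀, hl₀, hroot⟩ := intermediate_value_Icc' one_le_two hcont ⟨h₂.le, h₁.le⟩
  exact ⟨l₀, one_pos.trans_le hl₀.1, hroot⟩

section Root

variable {l₀ l : ℝ}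

theorem stationarityGap_pos_of_lt (hroot : stationarityGap l₀ = 0) (hl : 0 < l) (hlt : l < l₀) :
    0 < stationarityGap l :=
  strictConcaveOn_stationarityGap.pos_of_mem_Ioo (mem_univ 0) (mem_univ l₀)
    stationarityGap_zero hroot ⟨hl, hlt⟩

theorem stationarityGap_neg_of_gt (hl₀ : 0 < l₀) (hroot : stationarityGap l₀ = 0) (hlt : l₀ < l) :
    stationarityGap l < 0 :=
  strictConcaveOn_stationarityGap.neg_of_lt (mem_univ 0) (mem_univ l) stationarityGap_zero hroot
    hl₀ hlt

theorem eq_of_stationarityGap_eq_zero (hl₀ : 0 < l₀) (hroot : stationarityGap l₀ = 0) (hl : 0 < l)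
    (h : stationarityGap l = 0) : l = l₀ := by
  rcases lt_trichotomy l l₀ with hlt | heq | hgt
  · exact absurd h (stationarityGap_pos_of_lt hroot hl hlt).ne'
  · exact heq
  · exact absurd h (stationarityGap_neg_of_gt hl₀ hroot hgt).ne

noncomputable def efficiency (l : ℝ) : ℝ := l ^ 2 / (exp l - 1)

theorem hasDerivAt_efficiency {x : ℝ} (hx : x ≠ 0) :
    HasDerivAt efficiency (x * exp x * stationarityGap x / (exp x - 1) ^ 2) x := by
  have hden : exp x - 1 ≠ 0 := sub_ne_zero.2 (mt (exp_eq_one_iff x).1 hx)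
  refine ((hasDerivAt_pow 2 x).div ((hasDerivAt_exp x).sub_const 1) hden).congr_deriv ?_
  simp only [stationarityGap, exp_neg]
  field_simp
  ring

theorem strictMonoOn_efficiency (hroot : stationarityGap l₀ = 0) :
    StrictMonoOn efficiency (Ioc 0 l₀) := by
  refine strictMonoOn_of_deriv_pos (convex_Ioc 0 l₀)
    (fun x hx => (hasDerivAt_efficiency hx.1.ne').continuousAt.continuousWithinAt) fun x hx => ?_
  obtain ⟨hx₀, hxl₀⟩ : 0 < x ∧ x < l₀ := by rwa [interior_Ioc] at hx
  rw [(hasDerivAt_efficiency hx₀.ne').deriv]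
  have hgap := stationarityGap_pos_of_lt hroot hx₀ hxl₀
  have hden : 0 < exp x - 1 := sub_pos.2 (one_lt_exp_iff.2 hx₀)
  exact div_pos (mul_pos (by positivity) hgap) (by positivity)

theorem strictAntiOn_efficiency (hl₀ : 0 < l₀) (hroot : stationarityGap l₀ = 0) :
    StrictAntiOn efficiency (Ici l₀) := by
  refine strictAntiOn_of_deriv_neg (convex_Ici l₀)
    (fun x hx => (hasDerivAt_efficiency (hl₀.trans_le hx).ne').continuousAt.continuousWithinAt)
    fun x hx => ?_
  rw [interior_Ici] at hx
  have hx₀ : 0 < x := hl₀.trans hx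
  rw [(hasDerivAt_efficiency hx₀.ne').deriv]
  have hgap := stationarityGap_neg_of_gt hl₀ hroot hx
  have hden : 0 < exp x - 1 := sub_pos.2 (one_lt_exp_iff.2 hx₀)
  exact div_neg_of_neg_of_pos (mul_neg_of_pos_of_neg (by positivity) hgap) (by positivity)

theorem efficiency_lt_of_ne (hl₀ : 0 < l₀) (hroot : stationarityGap l₀ = 0)
    (hl : 0 < l) (hne : l ≠ l₀) : efficiency l < efficiency l₀ := by
  rcases hne.lt_or_gt with hlt | hgt
  · exact strictMonoOn_efficiency hroot ⟨hl, hlt.le⟩ ⟨hl₀, le_rfl⟩ hlt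
  · exact strictAntiOn_efficiency hl₀ hroot self_mem_Ici hgt.le hgt

end Root

/-- The equation `λ = 2 (1 - e^{-λ})` has a unique positive root `λ₀`, and the function
`g(λ) = λ² / (e^λ - 1)` attains its unique global maximum on `(0,∞)` at `λ = λ₀`. -/
theorem bernoulli_optimal_rate :
    (∃! l : ℝ, 0 < l ∧ l = 2 * (1 - Real.exp (-l))) ∧
    (∀ l₀ : ℝ, 0 < l₀ → l₀ = 2 * (1 - Real.exp (-l₀)) →
      ∀ l : ℝ, 0 < l → l ≠ l₀ →
        l ^ 2 / (Real.exp l - 1) < l₀ ^ 2 / (Real.exp l₀ - 1)) := by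
  simp only [← stationarityGap_eq_zero_iff]
  obtain ⟨l₀, hl₀, hroot⟩ := exists_pos_stationarityGap_eq_zero
  exact ⟨⟨l₀, ⟨hl₀, hroot⟩, fun l ⟨hl, h⟩ => eq_of_stationarityGap_eq_zero hl₀ hroot hl h⟩,
    fun l₀ hl₀ hroot l hl hne => efficiency_lt_of_ne hl₀ hroot hl hne⟩
end

section
/- Let q ∈ (0,1) and define, for real c > 0, I(c) = ∑_{y=1}^∞ [log(1-q^y)·(1-q^y)^c - log(1-q^{y-1})·(1-q^{y-1})^c]² / [(1-q^y)^c - (1-q^{y-1})^c] (with the y = 1 term interpreted with (1-q^0)^c = 0). Then, letting c → ∞ through the sequence c = q^{-r} for positive integers r, the limit lim_{r→∞} c²·I(c) exists and equals ψ_∞ = ∑_{k=-∞}^{∞} q^{2k}·(q^{-1} - 1)² / [exp(q^{k-1}) - exp(q^{k})], where the sum is over all integers k. -/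
open Filter

/-- Fisher information for the cardinality `c` from one observation of the maximum of `c`
independent geometric variables with CDF `1 - q ^ x`, `x = 1, 2, …`: summing over the values
`y = n + 1`, `n = 0, 1, 2, …` (note `(1 - q^0)^c = 0` for `c > 0` and `Real.log 0 = 0`,
matching the convention for the `y = 1` term). Here the outer powers `^ c` are real powers. -/
noncomputable def geomFisherInfo (q c : ℝ) : ℝ :=
  ∑' n : ℕ,
    (Real.log (1 - q ^ (n + 1)) * (1 - q ^ (n + 1)) ^ c -
      Real.log (1 - q ^ n) * (1 - q ^ n) ^ c) ^ 2 /
    ((1 - q ^ (n + 1)) ^ c - (1 - q ^ n) ^ c)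

/-!
With `c = q ^ (-r)` and `k = n - r`, the `n`-th summand of `c² I(c)` depends on `c` only through
`c log (1 - q ^ n) = c log (1 - q ^ k / c) → -q ^ k` and `(1 - q ^ n) ^ c = exp (c log (1 - q ^ n))`,
so it converges to the `k`-th summand of the Fisher information of the limit law
`exp (-q ^ k)` (a discretised Gumbel law). Tannery's theorem lets the limit pass through the sum:
every summand is at most `(x + x²) e^(-q x) / (1 - q)³` at `x = q ^ k`, which is summable over
`k ∈ ℤ`. Finally, the limiting summand at `k` is the `(k + 1)`-st summand of `ψ_∞` plus the
difference `w (k + 1) - w k` of `w k = q ^ (2k) exp (-q ^ k)`, which telescopes to zero.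
-/

open Real Topology

namespace Real

theorem log_one_sub_le_neg {t : ℝ} (ht : t < 1) : log (1 - t) ≤ -t := by
  linarith [log_le_sub_one_of_pos (sub_pos.2 ht)]

theorem neg_div_one_sub_le_log_one_sub {t : ℝ} (ht : t < 1) : -(t / (1 - t)) ≤ log (1 - t) := by
  have h := one_sub_inv_le_log_of_pos (sub_pos.2 ht)
  have h1t : 1 - t ≠ 0 := (sub_pos.2 ht).ne'
  rwa [show 1 - (1 - t)⁻¹ = -(t / (1 - t)) by field_simp; ring] at h

theorem sub_le_log_sub_log {x y : ℝ} (hx : 0 < x) (hxy : x ≤ y) (hy : y ≤ 1) :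
    y - x ≤ log y - log x := by
  have hy0 : 0 < y := hx.trans_le hxy
  have h := log_le_sub_one_of_pos (div_pos hx hy0)
  rw [log_div hx.ne' hy0.ne', div_sub_one hy0.ne', le_div_iff₀ hy0] at h
  nlinarith

theorem div_one_add_le_one_sub_exp_neg {t : ℝ} (ht : 0 ≤ t) : t / (1 + t) ≤ 1 - exp (-t) := by
  have h : exp (-t) ≤ (1 + t)⁻¹ := by
    rw [exp_neg]; exact inv_anti₀ (by linarith) (by linarith [add_one_le_exp t])
  have : t / (1 + t) = 1 - (1 + t)⁻¹ := by field_simp; ring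
  linarith

end Real

theorem summable_zpow_pow_mul_exp_neg {q a : ℝ} (hq0 : 0 < q) (hq1 : q < 1) (ha : 0 < a)
    (m : ℕ) : Summable fun k : ℤ => (q ^ k) ^ (m + 1) * exp (-(a * q ^ k)) := by
  have hgeom := summable_geometric_of_lt_one hq0.le hq1
  refine Summable.of_nat_of_neg ?_ ?_
  · refine Summable.of_nonneg_of_le (fun n => by positivity) (fun n => ?_) hgeom
    simp only [zpow_natCast]
    calc (q ^ n) ^ (m + 1) * exp (-(a * q ^ n)) ≤ q ^ n * 1 := by
          gcongr
          · exact pow_le_of_le_one (by positivity) (pow_le_one₀ hq0.le hq1.le) (by omega)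
          · exact exp_le_one_iff.2 (by nlinarith [pow_pos hq0 n])
      _ = q ^ n := mul_one _
  · -- `exp (a x) ≥ (a x)^(m+2) / (m+2)!` makes the terms `O(1/x) = O(q^n)` for `x = q^(-n)`
    refine Summable.of_nonneg_of_le (fun n => by positivity) (fun n => ?_)
      (hgeom.mul_left ((m + 2).factorial / a ^ (m + 2)))
    set x := q ^ (-(n : ℤ)) with hx
    have hx0 : 0 < x := zpow_pos hq0 _
    have hqn : q ^ n = x⁻¹ := by rw [hx, zpow_neg, zpow_natCast, inv_inv]
    have h := pow_div_factorial_le_exp _ (mul_pos ha hx0).le (m + 2)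
    rw [div_le_iff₀ (by positivity)] at h
    rw [hqn, exp_neg, ← div_eq_mul_inv, div_le_iff₀ (exp_pos _)]
    rw [show (m + 2).factorial / a ^ (m + 2) * x⁻¹ * exp (a * x) =
      exp (a * x) * (m + 2).factorial / (a ^ (m + 2) * x) by field_simp]
    rw [le_div_iff₀ (by positivity)]
    calc (x ^ (m + 1)) * (a ^ (m + 2) * x) = (a * x) ^ (m + 2) := by ring
      _ ≤ _ := h

theorem tsum_int_add_one_sub_eq_zero {α : Type*} [AddCommGroup α] [TopologicalSpace α]
    [IsTopologicalAddGroup α] [T2Space α] {f : ℤ → α} (hf : Summable f) :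
    ∑' k, (f (k + 1) - f k) = 0 := by
  have hf1 : Summable fun k => f (k + 1) := (Equiv.addRight 1).summable_iff.2 hf
  rw [hf1.tsum_sub hf]
  exact sub_eq_zero.2 ((Equiv.addRight (1 : ℤ)).tsum_eq f)

theorem pow_toNat_eq_zpow_mul {G : Type*} [GroupWithZero G] {q : G} (hq : q ≠ 0) {j : ℤ} {r : ℕ}
    (h : 0 ≤ j + r) : q ^ (j + r).toNat = q ^ j * q ^ r := by
  rw [← zpow_natCast, Int.toNat_of_nonneg h, zpow_add₀ hq, zpow_natCast]

namespace GeomFisher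

/-- With `aᵢ = Fᵢ ^ c` and `ℓᵢ = c * log Fᵢ`, this is `c² (∂_c p)² / p` for the mass
`p = a₁ - a₀` of a maximum with CDF `F ^ c`. -/
noncomputable def fisherSummand (ℓ₀ a₀ ℓ₁ a₁ : ℝ) : ℝ :=
  (ℓ₁ * a₁ - ℓ₀ * a₀) ^ 2 / (a₁ - a₀)

theorem fisherSummand_nonneg {ℓ₀ a₀ ℓ₁ a₁ : ℝ} (ha : a₀ ≤ a₁) : 0 ≤ fisherSummand ℓ₀ a₀ ℓ₁ a₁ :=
  div_nonneg (sq_nonneg _) (sub_nonneg.2 ha)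

theorem fisherSummand_le {ℓ₀ a₀ ℓ₁ a₁ M δ : ℝ} (hℓ₀ : ℓ₀ ∈ Set.Icc (-M) 0)
    (hℓ₁ : ℓ₁ ∈ Set.Icc (-M) 0) (ha₀ : 0 ≤ a₀) (ha₀₁ : a₀ ≤ δ * a₁) (ha₁ : 0 < a₁) (hδ : δ < 1) :
    fisherSummand ℓ₀ a₀ ℓ₁ a₁ ≤ M ^ 2 * a₁ / (1 - δ) := by
  obtain ⟨hℓ₀l, hℓ₀u⟩ := hℓ₀
  obtain ⟨hℓ₁l, hℓ₁u⟩ := hℓ₁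
  have hδa : (1 - δ) * a₁ ≤ a₁ - a₀ := by linarith
  have ha : a₀ ≤ a₁ := by nlinarith
  have hnum : (ℓ₁ * a₁ - ℓ₀ * a₀) ^ 2 ≤ (M * a₁) ^ 2 :=
    sq_le_sq' (by nlinarith) (by nlinarith)
  calc fisherSummand ℓ₀ a₀ ℓ₁ a₁ ≤ (M * a₁) ^ 2 / ((1 - δ) * a₁) :=
        div_le_div₀ (sq_nonneg _) hnum (mul_pos (sub_pos.2 hδ) ha₁) hδa
    _ = M ^ 2 * a₁ / (1 - δ) := by
        field_simp [(sub_pos.2 hδ).ne', ha₁.ne']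

theorem fisherSummand_neg_exp {a b : ℝ} (hab : a ≠ b) :
    fisherSummand (-a) (exp (-a)) (-b) (exp (-b)) =
      (a - b) ^ 2 / (exp a - exp b) + (b ^ 2 * exp (-b) - a ^ 2 * exp (-a)) := by
  have h₁ : exp a - exp b ≠ 0 := sub_ne_zero.2 (exp_injective.ne hab)
  have h₂ : exp (-b) - exp (-a) ≠ 0 := sub_ne_zero.2 (exp_injective.ne (neg_injective.ne hab.symm))
  rw [fisherSummand]
  field_simp
  rw [exp_neg, exp_neg] at *
  field_simp
  ring

theorem tendsto_fisherSummand {α : Type*} {l : Filter α} {ℓ₀ ℓ₁ : α → ℝ} {x₀ x₁ : ℝ}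
    (h₀ : Tendsto ℓ₀ l (𝓝 x₀)) (h₁ : Tendsto ℓ₁ l (𝓝 x₁)) (hx : x₀ ≠ x₁) :
    Tendsto (fun i => fisherSummand (ℓ₀ i) (exp (ℓ₀ i)) (ℓ₁ i) (exp (ℓ₁ i))) l
      (𝓝 (fisherSummand x₀ (exp x₀) x₁ (exp x₁))) :=
  (((h₁.mul h₁.rexp).sub (h₀.mul h₀.rexp)).pow 2).div (h₁.rexp.sub h₀.rexp)
    (sub_ne_zero.2 (exp_injective.ne hx.symm))

noncomputable def scaledSummand (q c : ℝ) (n : ℕ) : ℝ :=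
  fisherSummand (c * log (1 - q ^ n)) ((1 - q ^ n) ^ c)
    (c * log (1 - q ^ (n + 1))) ((1 - q ^ (n + 1)) ^ c)

theorem sq_mul_geomFisherInfo (q c : ℝ) :
    c ^ 2 * geomFisherInfo q c = ∑' n, scaledSummand q c n := by
  rw [geomFisherInfo, ← tsum_mul_left]
  congr 1 with n
  rw [scaledSummand, fisherSummand]
  ring

noncomputable def majorant (q x : ℝ) : ℝ :=
  (x + x ^ 2) * exp (-(q * x)) / (1 - q) ^ 3

theorem majorant_nonneg {q x : ℝ} (hq1 : q < 1) (hx : 0 ≤ x) : 0 ≤ majorant q x :=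
  div_nonneg (by positivity) (pow_pos (sub_pos.2 hq1) 3).le

section
variable {q : ℝ} (hq0 : 0 < q) (hq1 : q < 1)
include hq0 hq1

theorem one_sub_pow_rpow_eq_exp (c : ℝ) {m : ℕ} (hm : m ≠ 0) :
    (1 - q ^ m) ^ c = exp (c * log (1 - q ^ m)) := by
  rw [rpow_def_of_pos (sub_pos.2 (pow_lt_one₀ hq0.le hq1 hm)), mul_comm]

theorem mul_log_one_sub_pow_mem {c : ℝ} (hc : 0 ≤ c) (m : ℕ) :
    c * log (1 - q ^ m) ∈ Set.Icc (-(c * q ^ m / (1 - q))) 0 := by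
  have h1q : 0 < 1 - q := sub_pos.2 hq1
  rcases m.eq_zero_or_pos with rfl | hm
  · simp only [pow_zero, sub_self, log_zero, mul_zero, mul_one, Set.mem_Icc, le_refl, and_true,
      neg_nonpos]
    positivity
  have hqm : q ^ m ≤ q := pow_le_of_le_one hq0.le hq1.le hm.ne'
  have hqm1 : q ^ m < 1 := hqm.trans_lt hq1
  have hlog : -(q ^ m / (1 - q)) ≤ log (1 - q ^ m) :=
    calc -(q ^ m / (1 - q)) ≤ -(q ^ m / (1 - q ^ m)) := by gcongr
      _ ≤ log (1 - q ^ m) := neg_div_one_sub_le_log_one_sub hqm1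
  constructor
  · rw [mul_div_assoc, ← mul_neg]
    exact mul_le_mul_of_nonneg_left hlog hc
  · exact mul_nonpos_of_nonneg_of_nonpos hc (by linarith [log_one_sub_le_neg hqm1, pow_pos hq0 m])

theorem one_sub_pow_rpow_le_mul {c : ℝ} (hc : 0 < c) (n : ℕ) :
    (1 - q ^ n) ^ c ≤ exp (-((1 - q) * (c * q ^ n))) * (1 - q ^ (n + 1)) ^ c := by
  rcases n.eq_zero_or_pos with rfl | hn
  · rw [pow_zero, sub_self, zero_rpow hc.ne']
    exact mul_nonneg (exp_pos _).le (rpow_nonneg (by simpa using hq1.le) c)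
  rw [one_sub_pow_rpow_eq_exp hq0 hq1 c hn.ne', one_sub_pow_rpow_eq_exp hq0 hq1 c n.succ_ne_zero,
    ← exp_add]
  refine exp_le_exp.2 ?_
  have hgap := sub_le_log_sub_log (x := 1 - q ^ n) (y := 1 - q ^ (n + 1))
    (sub_pos.2 (pow_lt_one₀ hq0.le hq1 hn.ne'))
    (sub_le_sub_left (pow_le_pow_of_le_one hq0.le hq1.le n.le_succ) 1)
    (by linarith [pow_pos hq0 (n + 1)])
  have := mul_le_mul_of_nonneg_left hgap hc.le
  rw [pow_succ] at *
  nlinarith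

theorem scaledSummand_le {c : ℝ} (hc : 0 < c) (n : ℕ) :
    scaledSummand q c n ≤ majorant q (c * q ^ n) := by
  set x := c * q ^ n with hx
  have hx0 : 0 < x := by positivity
  have h1q : 0 < 1 - q := sub_pos.2 hq1
  set ℓ₁ := c * log (1 - q ^ (n + 1)) with hℓ₁
  have hqn1 : q ^ (n + 1) < 1 := pow_lt_one₀ hq0.le hq1 n.succ_ne_zero
  have hℓ₁_le : ℓ₁ ≤ -(q * x) := by
    have := mul_le_mul_of_nonneg_left (log_one_sub_le_neg hqn1) hc.le
    rw [hx, pow_succ] at *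
    linarith
  have hℓ₀_mem : c * log (1 - q ^ n) ∈ Set.Icc (-(x / (1 - q))) 0 :=
    mul_log_one_sub_pow_mem hq0 hq1 hc.le n
  have hℓ₁_mem : ℓ₁ ∈ Set.Icc (-(x / (1 - q))) 0 := by
    obtain ⟨hl, hu⟩ := mul_log_one_sub_pow_mem hq0 hq1 hc.le (n + 1)
    refine ⟨le_trans ?_ hl, hu⟩
    gcongr
    exact mul_le_mul_of_nonneg_left (pow_le_pow_of_le_one hq0.le hq1.le n.le_succ) hc.le
  have ha₁ : (1 - q ^ (n + 1)) ^ c = exp ℓ₁ := one_sub_pow_rpow_eq_exp hq0 hq1 c n.succ_ne_zero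
  have ha₀ := one_sub_pow_rpow_le_mul hq0 hq1 hc n
  rw [ha₁] at ha₀
  have hδ : exp (-((1 - q) * x)) < 1 := exp_lt_one_iff.2 (by nlinarith)
  have hbound := fisherSummand_le hℓ₀_mem hℓ₁_mem (rpow_nonneg (by
    linarith [pow_le_one₀ hq0.le hq1.le (n := n)]) c) ha₀ (ha₁ ▸ exp_pos ℓ₁) hδ
  have ht : 0 < (1 - q) * x := mul_pos h1q hx0
  calc scaledSummand q c n ≤ (x / (1 - q)) ^ 2 * exp ℓ₁ / (1 - exp (-((1 - q) * x))) := by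
        rwa [scaledSummand, ha₁]
    _ ≤ (x / (1 - q)) ^ 2 * exp (-(q * x)) / ((1 - q) * x / (1 + (1 - q) * x)) := by
        gcongr
        exact div_one_add_le_one_sub_exp_neg ht.le
    _ = x * (1 + (1 - q) * x) * exp (-(q * x)) / (1 - q) ^ 3 := by
        field_simp
    _ ≤ majorant q x := by
        rw [majorant]
        gcongr
        nlinarith

theorem summable_majorant : Summable fun k : ℤ => majorant q (q ^ k) := by
  have h₁ := summable_zpow_pow_mul_exp_neg hq0 hq1 hq0 0
  have h₂ := summable_zpow_pow_mul_exp_neg hq0 hq1 hq0 1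
  refine ((h₁.add h₂).div_const ((1 - q) ^ 3)).congr fun k => ?_
  rw [majorant]
  ring

theorem scaledSummand_nonneg {c : ℝ} (hc : 0 ≤ c) (n : ℕ) : 0 ≤ scaledSummand q c n :=
  fisherSummand_nonneg <| rpow_le_rpow (by linarith [pow_le_one₀ hq0.le hq1.le (n := n)])
    (sub_le_sub_left (pow_le_pow_of_le_one hq0.le hq1.le n.le_succ) 1) hc

end

-- re-indexed by `k = n - r`, so that `c * q ^ n = q ^ k` for `c = q ^ (-r)`
noncomputable def scaledTerm (q : ℝ) (r : ℕ) (k : ℤ) : ℝ :=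
  if -(r : ℤ) ≤ k then scaledSummand q (q ^ (-(r : ℤ))) (k + r).toNat else 0

theorem sq_mul_geomFisherInfo_eq_tsum_scaledTerm (q : ℝ) (r : ℕ) :
    (q ^ (-(r : ℤ))) ^ 2 * geomFisherInfo q (q ^ (-(r : ℤ))) = ∑' k : ℤ, scaledTerm q r k := by
  have hinj : Function.Injective fun n : ℕ => (n : ℤ) - r := fun a b h => by simpa using h
  rw [sq_mul_geomFisherInfo, ← hinj.tsum_eq (f := scaledTerm q r)]
  · congr 1 with n
    simp [scaledTerm]
  · intro k hk
    have hkr : -(r : ℤ) ≤ k := by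
      by_contra h
      exact hk (if_neg h)
    exact ⟨(k + r).toNat, by simp only; omega⟩

noncomputable def limitTerm (q : ℝ) (k : ℤ) : ℝ :=
  fisherSummand (-q ^ k) (exp (-q ^ k)) (-q ^ (k + 1)) (exp (-q ^ (k + 1)))

section
variable {q : ℝ} (hq0 : 0 < q) (hq1 : q < 1)
include hq0 hq1

theorem norm_scaledTerm_le (r : ℕ) (k : ℤ) : ‖scaledTerm q r k‖ ≤ majorant q (q ^ k) := by
  have hc : 0 < q ^ (-(r : ℤ)) := zpow_pos hq0 _
  unfold scaledTerm
  split_ifs with hk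
  · rw [norm_of_nonneg (scaledSummand_nonneg hq0 hq1 hc.le _)]
    convert scaledSummand_le hq0 hq1 hc _ using 2
    rw [pow_toNat_eq_zpow_mul hq0.ne' (by omega), zpow_neg, zpow_natCast]
    field_simp
  · simpa using majorant_nonneg hq1 (zpow_pos hq0 k).le

theorem tendsto_scaledTerm (k : ℤ) :
    Tendsto (fun r : ℕ => scaledTerm q r k) atTop (𝓝 (limitTerm q k)) := by
  have hc : Tendsto (fun r : ℕ => q ^ (-(r : ℤ))) atTop atTop := by
    simpa [zpow_neg, zpow_natCast, inv_pow] using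
      tendsto_pow_atTop_atTop_of_one_lt ((one_lt_inv₀ hq0).2 hq1)
  have hlog (j : ℤ) : Tendsto (fun r : ℕ => q ^ (-(r : ℤ)) * log (1 + -q ^ j / q ^ (-(r : ℤ))))
      atTop (𝓝 (-q ^ j)) :=
    (tendsto_mul_log_one_add_div_atTop (-q ^ j)).comp hc
  have hne : -q ^ k ≠ -q ^ (k + 1) :=
    neg_injective.ne ((zpow_right_strictAnti₀ hq0 hq1).injective.ne (by omega))
  refine (tendsto_fisherSummand (hlog k) (hlog (k + 1)) hne).congr' ?_
  filter_upwards [eventually_ge_atTop (1 - k).toNat] with r hr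
  have hpow (j : ℤ) (hj : 0 ≤ j + r) : 1 + -q ^ j / q ^ (-(r : ℤ)) = 1 - q ^ (j + r).toNat := by
    rw [pow_toNat_eq_zpow_mul hq0.ne' hj, zpow_neg, zpow_natCast, div_inv_eq_mul]
    ring
  rw [scaledTerm, if_pos (by omega), scaledSummand, hpow k (by omega), hpow (k + 1) (by omega),
    show (k + 1 + r).toNat = (k + r).toNat + 1 by omega,
    one_sub_pow_rpow_eq_exp hq0 hq1 _ (by omega), one_sub_pow_rpow_eq_exp hq0 hq1 _ (by omega)]

theorem limitTerm_eq (k : ℤ) :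
    limitTerm q k =
      q ^ (2 * (k + 1)) * (q⁻¹ - 1) ^ 2 / (exp (q ^ (k + 1 - 1)) - exp (q ^ (k + 1))) +
        ((q ^ (k + 1)) ^ 2 * exp (-q ^ (k + 1)) - (q ^ k) ^ 2 * exp (-q ^ k)) := by
  have hne : q ^ k ≠ q ^ (k + 1) := (zpow_right_strictAnti₀ hq0 hq1).injective.ne (by omega)
  have hnum : q ^ (2 * (k + 1)) * (q⁻¹ - 1) ^ 2 = (q ^ k - q ^ (k + 1)) ^ 2 := by
    rw [mul_comm 2, zpow_mul, zpow_add_one₀ hq0.ne']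
    field_simp
  rw [limitTerm, fisherSummand_neg_exp hne, hnum, add_sub_cancel_right]

theorem tsum_limitTerm :
    ∑' k, limitTerm q k =
      ∑' k : ℤ, q ^ (2 * k) * (q⁻¹ - 1) ^ 2 / (exp (q ^ (k - 1)) - exp (q ^ k)) := by
  set ψ := fun k : ℤ => q ^ (2 * k) * (q⁻¹ - 1) ^ 2 / (exp (q ^ (k - 1)) - exp (q ^ k))
  set w := fun k : ℤ => (q ^ k) ^ 2 * exp (-q ^ k)
  have hw : Summable w := by simpa using summable_zpow_pow_mul_exp_neg hq0 hq1 one_pos 1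
  have hlim : Summable (limitTerm q) := by
    refine Summable.of_nonneg_of_le (fun k => ?_) (fun k => ?_) (summable_majorant hq0 hq1)
    · refine fisherSummand_nonneg (exp_le_exp.2 (neg_le_neg ?_))
      exact (zpow_right_strictAnti₀ hq0 hq1).antitone (by omega)
    · exact le_of_tendsto' (tendsto_scaledTerm hq0 hq1 k) fun r =>
        (le_norm_self _).trans (norm_scaledTerm_le hq0 hq1 r k)
  have hdiff : Summable fun k => w (k + 1) - w k := ((Equiv.addRight 1).summable_iff.2 hw).sub hw
  have hψ : Summable fun k => ψ (k + 1) :=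
    (hlim.sub hdiff).congr fun k => by rw [limitTerm_eq hq0 hq1]; ring
  calc ∑' k, limitTerm q k = ∑' k, (ψ (k + 1) + (w (k + 1) - w k)) :=
        tsum_congr (limitTerm_eq hq0 hq1)
    _ = ∑' k, ψ (k + 1) + ∑' k, (w (k + 1) - w k) := hψ.tsum_add hdiff
    _ = ∑' k, ψ k := by
        rw [tsum_int_add_one_sub_eq_zero hw, add_zero]
        exact (Equiv.addRight 1).tsum_eq ψ

end

end GeomFisher

open GeomFisher

/-- As `c → ∞` through the sequence `c = q^{-r}`, `r` a positive integer, `c² I(c)` converges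
to `ψ_∞ = ∑_{k ∈ ℤ} q^{2k} (q⁻¹ - 1)² / (exp (q^{k-1}) - exp (q^k))`. -/
theorem geom_fisher_limit (q : ℝ) (hq : q ∈ Set.Ioo (0 : ℝ) 1) :
    Tendsto
      (fun r : ℕ => (q ^ (-(r : ℤ))) ^ 2 * geomFisherInfo q (q ^ (-(r : ℤ))))
      atTop
      (nhds (∑' k : ℤ,
        q ^ (2 * k) * (q⁻¹ - 1) ^ 2 / (Real.exp (q ^ (k - 1)) - Real.exp (q ^ k)))) := by
  obtain ⟨hq0, hq1⟩ := hq
  simp_rw [sq_mul_geomFisherInfo_eq_tsum_scaledTerm, ← tsum_limitTerm hq0 hq1]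
  exact tendsto_tsum_of_dominated_convergence (summable_majorant hq0 hq1)
    (tendsto_scaledTerm hq0 hq1) (.of_forall (norm_scaledTerm_le hq0 hq1))
end

section
/- Let m be a positive integer, let G be a random variable with the Gamma(m,1) distribution, let c > 0, and set ĉ = m·c/G. Then for every ε > 0, P(ĉ ≥ (1+ε)·c) ≤ exp(-m·ε²/C_1), where C_1 = ε²·(1+ε) / (-ε + (1+ε)·log(1+ε)); equivalently, P(G ≤ m/(1+ε)) ≤ exp(-m·[log(1+ε) - ε/(1+ε)]). -/
/-!
The event `ĉ ≥ (1+ε) c` forces `G ≤ m/(1+ε)`, so this is a Chernoff bound for the lower tail of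
the Gamma law: for `t ≥ 0`, `P(G ≤ y) ≤ exp (t y) E[exp (-t G)] = exp (t y) (1+t)^(-m)`, where the
Laplace transform is computed by absorbing `exp (-t x)` into the density, which turns it into
`(1+t)^(-m)` times the `Gamma(m, 1+t)` density. Taking `y = m/(1+ε)` and `t = ε` gives the exponent
`-m (log (1+ε) - ε/(1+ε)) = -m ε² / C₁`.
-/

open MeasureTheory ProbabilityTheory Real Set

lemma gammaPDFReal_mul_exp_neg {a r t : ℝ} (hr : 0 < r) (hrt : 0 < r + t) (x : ℝ) :
    gammaPDFReal a r x * exp (-(t * x)) = (r / (r + t)) ^ a * gammaPDFReal a (r + t) x := by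
  rcases lt_or_ge x 0 with hx | hx
  · simp [gammaPDFReal, hx.not_ge]
  · simp only [gammaPDFReal, if_pos hx, div_rpow hr.le hrt.le]
    rw [show exp (-((r + t) * x)) = exp (-(r * x)) * exp (-(t * x)) by rw [← exp_add]; ring_nf]
    field_simp [(rpow_pos_of_pos hrt a).ne']

lemma lintegral_exp_neg_mul_gammaMeasure {a r t : ℝ} (ha : 0 < a) (hr : 0 < r) (hrt : 0 < r + t) :
    ∫⁻ x, ENNReal.ofReal (exp (-(t * x))) ∂gammaMeasure a r = ENNReal.ofReal ((r / (r + t)) ^ a) := by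
  have hpdf (b s : ℝ) : Measurable (gammaPDF b s) := (measurable_gammaPDFReal b s).ennreal_ofReal
  rw [gammaMeasure, lintegral_withDensity_eq_lintegral_mul _ (hpdf a r) (by fun_prop)]
  have hdens : ∀ x, (gammaPDF a r * fun x => ENNReal.ofReal (exp (-(t * x)))) x =
      ENNReal.ofReal ((r / (r + t)) ^ a) * gammaPDF a (r + t) x := fun x => by
    rw [Pi.mul_apply, gammaPDF, gammaPDF, ← ENNReal.ofReal_mul (gammaPDFReal_nonneg ha hr x),
      gammaPDFReal_mul_exp_neg hr hrt, ENNReal.ofReal_mul (by positivity)]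
  rw [lintegral_congr hdens, lintegral_const_mul _ (hpdf a _),
    lintegral_gammaPDF_eq_one ha hrt, mul_one]

lemma measure_Iic_le_exp_mul_lintegral_exp_neg (μ : Measure ℝ) {t : ℝ} (ht : 0 ≤ t) (y : ℝ) :
    μ (Iic y) ≤ ENNReal.ofReal (exp (t * y)) * ∫⁻ x, ENNReal.ofReal (exp (-(t * x))) ∂μ := by
  rw [← lintegral_const_mul' _ _ ENNReal.ofReal_ne_top]
  calc μ (Iic y) = ∫⁻ _ in Iic y, 1 ∂μ := (setLIntegral_one _).symm
    _ ≤ ∫⁻ x in Iic y, ENNReal.ofReal (exp (t * y)) * ENNReal.ofReal (exp (-(t * x))) ∂μ := by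
      refine setLIntegral_mono (by fun_prop) fun x hx => ?_
      rw [← ENNReal.ofReal_mul (exp_nonneg _), ← exp_add, ← ENNReal.ofReal_one]
      exact ENNReal.ofReal_le_ofReal (one_le_exp (by nlinarith [mem_Iic.mp hx]))
    _ ≤ _ := setLIntegral_le_lintegral _ _

lemma gammaMeasure_Iic_le {a r t : ℝ} (ha : 0 < a) (hr : 0 < r) (ht : 0 ≤ t) (y : ℝ) :
    gammaMeasure a r (Iic y) ≤ ENNReal.ofReal (exp (t * y) * (r / (r + t)) ^ a) := by
  rw [ENNReal.ofReal_mul (exp_nonneg _),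
    ← lintegral_exp_neg_mul_gammaMeasure ha hr (by linarith)]
  exact measure_Iic_le_exp_mul_lintegral_exp_neg _ ht y

lemma div_one_add_lt_log_one_add {ε : ℝ} (hε : 0 < ε) : ε / (1 + ε) < log (1 + ε) := by
  have h := log_lt_sub_one_of_pos (inv_pos.mpr (by linarith : 0 < 1 + ε))
    (inv_ne_one.mpr (by linarith))
  rw [log_inv] at h
  have : (1 + ε)⁻¹ - 1 = -(ε / (1 + ε)) := by field_simp; ring
  linarith

lemma exp_mul_div_one_add_mul_one_div_rpow {ε : ℝ} (hε : 0 < ε) (m : ℝ) :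
    exp (ε * (m / (1 + ε))) * (1 / (1 + ε)) ^ m =
      exp (-m * ε ^ 2 / (ε ^ 2 * (1 + ε) / (-ε + (1 + ε) * log (1 + ε)))) := by
  have h1ε : 0 < 1 + ε := by linarith
  have hD : 0 < -ε + (1 + ε) * log (1 + ε) := by
    have := (div_lt_iff₀ h1ε).mp (div_one_add_lt_log_one_add hε)
    linarith
  rw [rpow_def_of_pos (by positivity), ← exp_add, log_div one_ne_zero h1ε.ne', log_one]
  congr 1
  field_simp
  ring

lemma le_div_of_mul_le_mul_div {k c m x : ℝ} (hk : 0 < k) (hc : 0 < c) (hm : 0 ≤ m)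
    (h : k * c ≤ m * c / x) : x ≤ m / k := by
  rcases le_or_gt x 0 with hx | hx
  · exact hx.trans (by positivity)
  · rw [le_div_iff₀ hx] at h
    rw [le_div_iff₀ hk]
    nlinarith

theorem maxterm_upper_tail_bound_general {Ω : Type*} [MeasurableSpace Ω]
    (P : Measure Ω)
    (m : ℕ) (hm : 0 < m)
    (G : Ω → ℝ) (hGmeas : Measurable G)
    (hGlaw : Measure.map G P = gammaMeasure m 1)
    (c : ℝ) (hc : 0 < c) (ε : ℝ) (hε : 0 < ε) :
    P {ω | (1 + ε) * c ≤ (m : ℝ) * c / G ω} ≤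
      ENNReal.ofReal (Real.exp (-(m : ℝ) * ε ^ 2 /
        (ε ^ 2 * (1 + ε) / (-ε + (1 + ε) * Real.log (1 + ε))))) := by
  have h1ε : 0 < 1 + ε := by linarith
  calc P {ω | (1 + ε) * c ≤ (m : ℝ) * c / G ω} ≤ P (G ⁻¹' Iic (m / (1 + ε))) :=
        measure_mono fun ω hω => le_div_of_mul_le_mul_div h1ε hc m.cast_nonneg hω
    _ = gammaMeasure m 1 (Iic (m / (1 + ε))) := by
        rw [← hGlaw, Measure.map_apply hGmeas measurableSet_Iic]
    _ ≤ ENNReal.ofReal (exp (ε * (m / (1 + ε))) * (1 / (1 + ε)) ^ (m : ℝ)) :=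
        gammaMeasure_Iic_le (Nat.cast_pos.mpr hm) one_pos hε.le _
    _ = _ := by rw [exp_mul_div_one_add_mul_one_div_rpow hε]

/-- Upper tail bound: if `G ~ Gamma(m,1)` and `ĉ = m c / G`, then for every `ε > 0`,
`P(ĉ ≥ (1+ε) c) ≤ exp (-m ε² / C₁)` with `C₁ = ε² (1+ε) / (-ε + (1+ε) log (1+ε))`. -/
theorem maxterm_upper_tail_bound {Ω : Type*} [MeasurableSpace Ω]
    (P : Measure Ω) [IsProbabilityMeasure P]
    (m : ℕ) (hm : 0 < m)
    (G : Ω → ℝ) (hGmeas : Measurable G)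
    (hGlaw : Measure.map G P = gammaMeasure m 1)
    (c : ℝ) (hc : 0 < c) (ε : ℝ) (hε : 0 < ε) :
    P {ω | (1 + ε) * c ≤ (m : ℝ) * c / G ω} ≤
      ENNReal.ofReal (Real.exp (-(m : ℝ) * ε ^ 2 /
        (ε ^ 2 * (1 + ε) / (-ε + (1 + ε) * Real.log (1 + ε))))) :=
  maxterm_upper_tail_bound_general P m hm G hGmeas hGlaw c hc ε hε
end

section
/- Let m be a positive integer, let G be a random variable with the Gamma(m,1) distribution, let c > 0, and set ĉ = m·c/G. Then for every ε ∈ (0,1), P(ĉ ≤ (1-ε)·c) = P(G ≥ m/(1-ε)) ≤ exp(-m·ε²/C_2) = exp(-m·[ε/(1-ε) + log(1-ε)]), where C_2 = ε²·(1-ε) / (ε + (1-ε)·log(1-ε)). -/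
open MeasureTheory ProbabilityTheory

lemma gamma_upper_tail_aux (m : ℕ) (hm : 0 < m) {ε : ℝ} (hε0 : 0 < ε) (hε1 : ε < 1) :
    gammaMeasure m 1 (Set.Ici ((m : ℝ) / (1 - ε))) ≤
      ENNReal.ofReal (Real.exp (-(m : ℝ) * (ε / (1 - ε) + Real.log (1 - ε)))) := by
  have hr : (0:ℝ) < 1 - ε := by linarith
  have hmR : (0:ℝ) < (m : ℝ) := by exact_mod_cast hm
  set a : ℝ := (m : ℝ) / (1 - ε) with ha
  have ha0 : 0 < a := by positivity
  have hΓ : 0 < Real.Gamma (m : ℝ) := Real.Gamma_pos_of_pos hmR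
  have hm1 : Measurable fun x : ℝ => x ^ ((m:ℝ) - 1) * Real.exp (-((1 - ε) * x)) :=
    (measurable_id'.pow_const _).mul ((measurable_id'.const_mul _).neg.exp)
  have hfmeas : Measurable fun x : ℝ =>
      ENNReal.ofReal (x ^ ((m:ℝ) - 1) * Real.exp (-((1 - ε) * x))) :=
    hm1.ennreal_ofReal
  rw [gammaMeasure, withDensity_apply _ measurableSet_Ici]
  calc ∫⁻ x in Set.Ici a, gammaPDF (m : ℝ) 1 x
      ≤ ∫⁻ x in Set.Ici a, ENNReal.ofReal (Real.exp (-(ε * a)) / Real.Gamma (m:ℝ)) *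
          ENNReal.ofReal (x ^ ((m:ℝ) - 1) * Real.exp (-((1 - ε) * x))) := by
        refine setLIntegral_mono' measurableSet_Ici fun x hx => ?_
        have hx0 : (0:ℝ) ≤ x := le_trans ha0.le hx
        rw [gammaPDF_of_nonneg hx0, ← ENNReal.ofReal_mul (by positivity)]
        apply ENNReal.ofReal_le_ofReal
        have hxp : (0:ℝ) ≤ x ^ ((m:ℝ) - 1) := Real.rpow_nonneg hx0 _
        have key : Real.exp (-x) ≤ Real.exp (-((1 - ε) * x)) * Real.exp (-(ε * a)) := by
          rw [← Real.exp_add]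
          apply Real.exp_le_exp.mpr
          have : a ≤ x := hx
          nlinarith
        have h2 := mul_le_mul_of_nonneg_left key
          (show 0 ≤ x ^ ((m:ℝ) - 1) / Real.Gamma (m:ℝ) by positivity)
        calc (1:ℝ) ^ (m:ℝ) / Real.Gamma (m:ℝ) * x ^ ((m:ℝ) - 1) * Real.exp (-(1 * x))
            = x ^ ((m:ℝ) - 1) / Real.Gamma (m:ℝ) * Real.exp (-x) := by
              rw [Real.one_rpow]; ring_nf
          _ ≤ x ^ ((m:ℝ) - 1) / Real.Gamma (m:ℝ) *
              (Real.exp (-((1 - ε) * x)) * Real.exp (-(ε * a))) := h2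
          _ = Real.exp (-(ε * a)) / Real.Gamma (m:ℝ) *
              (x ^ ((m:ℝ) - 1) * Real.exp (-((1 - ε) * x))) := by ring
    _ = ENNReal.ofReal (Real.exp (-(ε * a)) / Real.Gamma (m:ℝ)) *
          ∫⁻ x in Set.Ici a, ENNReal.ofReal (x ^ ((m:ℝ) - 1) * Real.exp (-((1 - ε) * x))) := by
        rw [lintegral_const_mul _ hfmeas]
    _ ≤ ENNReal.ofReal (Real.exp (-(ε * a)) / Real.Gamma (m:ℝ)) *
          ∫⁻ x in Set.Ioi 0, ENNReal.ofReal (x ^ ((m:ℝ) - 1) * Real.exp (-((1 - ε) * x))) := by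
        gcongr
    _ ≤ ENNReal.ofReal (Real.exp (-(m : ℝ) * (ε / (1 - ε) + Real.log (1 - ε)))) := by
        have hint := Real.integral_rpow_mul_exp_neg_mul_Ioi hmR hr
        have hnn : 0 ≤ᵐ[volume.restrict (Set.Ioi (0:ℝ))]
            fun x => x ^ ((m:ℝ) - 1) * Real.exp (-((1 - ε) * x)) := by
          filter_upwards [ae_restrict_mem measurableSet_Ioi] with x hx
          have : (0:ℝ) < x := hx
          positivity
        have heq := integral_eq_lintegral_of_nonneg_ae hnn
          hm1.aestronglyMeasurable
        set I := ∫⁻ x in Set.Ioi (0:ℝ),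
          ENNReal.ofReal (x ^ ((m:ℝ) - 1) * Real.exp (-((1 - ε) * x))) with hI
        have hval : I.toReal = (1 / (1 - ε)) ^ (m:ℝ) * Real.Gamma (m:ℝ) := by
          rw [← heq, hint]
        have hpos : (0:ℝ) < (1 / (1 - ε)) ^ (m:ℝ) * Real.Gamma (m:ℝ) := by positivity
        have hItop : I ≠ ⊤ := by
          intro h
          rw [h, ENNReal.toReal_top] at hval
          linarith
        have hIval : I = ENNReal.ofReal ((1 / (1 - ε)) ^ (m:ℝ) * Real.Gamma (m:ℝ)) := by
          rw [← hval, ENNReal.ofReal_toReal hItop]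
        rw [hIval, ← ENNReal.ofReal_mul (by positivity)]
        apply ENNReal.ofReal_le_ofReal
        have hrp : (1 / (1 - ε)) ^ (m:ℝ) = Real.exp (-Real.log (1 - ε) * (m:ℝ)) := by
          rw [Real.rpow_def_of_pos (by positivity), one_div, Real.log_inv]
        rw [hrp]
        have : Real.exp (-(ε * a)) / Real.Gamma (m:ℝ) *
            (Real.exp (-Real.log (1 - ε) * (m:ℝ)) * Real.Gamma (m:ℝ)) =
            Real.exp (-(ε * a)) * Real.exp (-Real.log (1 - ε) * (m:ℝ)) := by
          field_simp
        rw [this, ← Real.exp_add]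
        apply le_of_eq
        congr 1
        rw [ha]
        ring

/-- Lower tail bound: if `G ~ Gamma(m,1)` and `ĉ = m c / G`, then for every `ε ∈ (0,1)`,
`P(ĉ ≤ (1-ε) c) ≤ exp (-m ε² / C₂)` with `C₂ = ε² (1-ε) / (ε + (1-ε) log (1-ε))`. -/
theorem maxterm_lower_tail_bound {Ω : Type*} [MeasurableSpace Ω]
    (P : Measure Ω) [IsProbabilityMeasure P]
    (m : ℕ) (hm : 0 < m)
    (G : Ω → ℝ) (hGmeas : Measurable G)
    (hGlaw : Measure.map G P = gammaMeasure m 1)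
    (c : ℝ) (hc : 0 < c) (ε : ℝ) (hε : ε ∈ Set.Ioo (0 : ℝ) 1) :
    P {ω | (m : ℝ) * c / G ω ≤ (1 - ε) * c} ≤
      ENNReal.ofReal (Real.exp (-(m : ℝ) * ε ^ 2 /
        (ε ^ 2 * (1 - ε) / (ε + (1 - ε) * Real.log (1 - ε))))) := by
  obtain ⟨hε0, hε1⟩ := hε
  have hr : (0:ℝ) < 1 - ε := by linarith
  have hmR : (0:ℝ) < (m : ℝ) := by exact_mod_cast hm
  set a : ℝ := (m : ℝ) / (1 - ε) with ha
  have ha0 : 0 < a := by positivity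
  -- positivity of the denominator D = ε + (1-ε) log(1-ε)
  have ht0 : ε / (1 - ε) ≠ 0 := by positivity
  have h1 : ε / (1 - ε) + 1 < Real.exp (ε / (1 - ε)) := Real.add_one_lt_exp ht0
  have h1' : 1 / (1 - ε) < Real.exp (ε / (1 - ε)) := by
    have : (1:ℝ) / (1 - ε) = ε / (1 - ε) + 1 := by field_simp; ring
    linarith
  have h2 : Real.exp (-(ε / (1 - ε))) < 1 - ε := by
    rw [Real.exp_neg]
    have hexp := Real.exp_pos (ε / (1 - ε))
    rw [inv_lt_comm₀ hexp hr]
    calc (1 - ε)⁻¹ = 1 / (1 - ε) := (one_div _).symm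
      _ < Real.exp (ε / (1 - ε)) := h1'
  have hL : -(ε / (1 - ε)) < Real.log (1 - ε) := (Real.lt_log_iff_exp_lt hr).mpr h2
  have hDmul := mul_lt_mul_of_pos_left hL hr
  have hE1 : (1 - ε) * -(ε / (1 - ε)) = -ε := by
    field_simp
  have hD : 0 < ε + (1 - ε) * Real.log (1 - ε) := by linarith
  -- exponent identity
  have hexp_eq : -(m : ℝ) * ε ^ 2 /
      (ε ^ 2 * (1 - ε) / (ε + (1 - ε) * Real.log (1 - ε))) =
      -(m : ℝ) * (ε / (1 - ε) + Real.log (1 - ε)) := by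
    field_simp
  -- event inclusion
  have hsub : {ω | (m : ℝ) * c / G ω ≤ (1 - ε) * c} ⊆
      G ⁻¹' (Set.Iic 0 ∪ Set.Ici a) := by
    intro ω hω
    simp only [Set.mem_setOf_eq] at hω
    by_cases hg : G ω ≤ 0
    · exact Or.inl hg
    · push_neg at hg
      right
      have h3 : (m : ℝ) * c ≤ (1 - ε) * c * G ω := by
        rwa [div_le_iff₀ hg] at hω
      have : (m : ℝ) ≤ (1 - ε) * G ω := by
        have hcne : c ≠ 0 := hc.ne'
        nlinarith
      rw [Set.mem_Ici, ha, div_le_iff₀ hr]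
      linarith [this]
  have hIic : gammaMeasure (m : ℝ) 1 (Set.Iic 0) = 0 := by
    rw [gammaMeasure, withDensity_apply _ measurableSet_Iic,
      setLIntegral_congr (Iio_ae_eq_Iic (a := (0:ℝ))).symm]
    exact lintegral_gammaPDF_of_nonpos le_rfl
  calc P {ω | (m : ℝ) * c / G ω ≤ (1 - ε) * c}
      ≤ P (G ⁻¹' (Set.Iic 0 ∪ Set.Ici a)) := measure_mono hsub
    _ = gammaMeasure (m : ℝ) 1 (Set.Iic 0 ∪ Set.Ici a) := by
        rw [← hGlaw, Measure.map_apply hGmeas (measurableSet_Iic.union measurableSet_Ici)]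
    _ ≤ gammaMeasure (m : ℝ) 1 (Set.Iic 0) + gammaMeasure (m : ℝ) 1 (Set.Ici a) :=
        measure_union_le _ _
    _ = gammaMeasure (m : ℝ) 1 (Set.Ici a) := by rw [hIic, zero_add]
    _ ≤ ENNReal.ofReal (Real.exp (-(m : ℝ) * (ε / (1 - ε) + Real.log (1 - ε)))) :=
        gamma_upper_tail_aux m hm hε0 hε1
    _ = ENNReal.ofReal (Real.exp (-(m : ℝ) * ε ^ 2 /
          (ε ^ 2 * (1 - ε) / (ε + (1 - ε) * Real.log (1 - ε))))) := by rw [hexp_eq]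
end

section
/- For each α ∈ (0,1), let X_α be a positive strictly α-stable random variable. Then X_α^{-α} converges in distribution to the Exponential(1) distribution as α → 0⁺; equivalently, X_α^{α} converges in distribution to 1/Z where Z ~ Exponential(1). -/
open MeasureTheory ProbabilityTheory Filter BoundedContinuousFunction

/-- `X` is a positive strictly `α`-stable random variable (under `P`): it is a.s. positive
and its Laplace transform is `E[exp (-λ X)] = exp (-λ^α)` for all `λ ≥ 0`. -/
def IsPositiveStable {Ω : Type*} [MeasurableSpace Ω] (P : Measure Ω)
    (α : ℝ) (X : Ω → ℝ) : Prop :=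
  (∀ᵐ ω ∂P, 0 < X ω) ∧
    ∀ l : ℝ, 0 ≤ l → ∫ ω, Real.exp (-(l * X ω)) ∂P = Real.exp (-(l ^ α))

/-!
Write `Y_α = X_α ^ (-α)`, so that `P(x < Y_α) = P(X_α < x ^ (-1/α))` for `x > 0`. Markov's
inequality for `exp (-λ X_α)` and the trivial bound `exp (-λ X_α) ≤ 1` on `{X_α < t}` squeeze this
tail, for `λ = c x ^ (1/α)`, between `exp (-c ^ α x) - exp (-c)` and `exp c · exp (-c ^ α x)`.
With `c = 1/α` and `c = α` both bounds tend to `exp (-x)` because `α ^ α → 1`. Convergence of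
all tails of laws on `ℝ` gives weak convergence, as the intervals `(a, b]` form a π-system
containing arbitrarily small neighbourhoods of every point.
-/

open Set Topology Real

namespace MeasureTheory.ProbabilityMeasure

lemma apply_Ioc_eq_sub (μ : ProbabilityMeasure ℝ) {a b : ℝ} (hab : a ≤ b) :
    μ (Ioc a b) = μ (Ioi a) - μ (Ioi b) := by
  apply ENNReal.coe_injective
  simp only [ENNReal.coe_sub, ennreal_coeFn_eq_coeFn_toMeasure]
  rw [← Ioi_sdiff_Ioi, measure_sdiff (Ioi_subset_Ioi hab) measurableSet_Ioi.nullMeasurableSet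
    (measure_ne_top _ _)]

theorem tendsto_of_forall_tendsto_Ioi {ι : Type*} {l : Filter ι}
    [l.IsCountablyGenerated] {μs : ι → ProbabilityMeasure ℝ} {ν : ProbabilityMeasure ℝ}
    (h : ∀ x, Tendsto (fun i ↦ μs i (Ioi x)) l (𝓝 (ν (Ioi x)))) :
    Tendsto μs l (𝓝 ν) := by
  refine (isPiSystem_Ioc id id).tendsto_probabilityMeasure_of_tendsto_of_mem ?_ ?_ ?_
  · rintro _ ⟨a, b, -, rfl⟩
    exact measurableSet_Ioc
  · intro u hu x hx
    obtain ⟨a, b, hxab, hsub⟩ := mem_nhds_iff_exists_Ioo_subset.1 (hu.mem_nhds hx)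
    have hxc : x < (x + b) / 2 := by linarith [hxab.2]
    exact ⟨Ioc a ((x + b) / 2), ⟨a, (x + b) / 2, hxab.1.trans hxc, rfl⟩,
      Ioc_mem_nhds hxab.1 hxc, (Ioc_subset_Ioo_right (by linarith [hxab.2])).trans hsub⟩
  · rintro _ ⟨a, b, hab, rfl⟩
    simp only [fun μ : ProbabilityMeasure ℝ ↦ apply_Ioc_eq_sub μ hab.le]
    exact (h a).sub (h b)

end MeasureTheory.ProbabilityMeasure

theorem tendsto_integral_comp_of_tendsto_measureReal_lt {ι Ω : Type*} [MeasurableSpace Ω]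
    {P : Measure Ω} [IsProbabilityMeasure P] {l : Filter ι} [l.IsCountablyGenerated]
    {Y : ι → Ω → ℝ} (hY : ∀ i, AEMeasurable (Y i) P) (ν : ProbabilityMeasure ℝ)
    (h : ∀ x, Tendsto (fun i ↦ P.real {ω | x < Y i ω}) l (𝓝 ((ν : Measure ℝ).real (Ioi x))))
    (f : ℝ →ᵇ ℝ) :
    Tendsto (fun i ↦ ∫ ω, f (Y i ω) ∂P) l (𝓝 (∫ x, f x ∂(ν : Measure ℝ))) := by
  let μs : ι → ProbabilityMeasure ℝ :=
    fun i ↦ ⟨P.map (Y i), Measure.isProbabilityMeasure_map (hY i)⟩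
  have hμs : Tendsto μs l (𝓝 ν) := by
    refine ProbabilityMeasure.tendsto_of_forall_tendsto_Ioi fun x ↦ ?_
    rw [← NNReal.tendsto_coe]
    convert h x using 2 with i
    · rw [← ProbabilityMeasure.measureReal_eq_coe_coeFn, ProbabilityMeasure.coe_mk,
        measureReal_def, Measure.map_apply_of_aemeasurable (hY i) measurableSet_Ioi]
      rfl
    · simp
  convert ProbabilityMeasure.tendsto_iff_forall_integral_tendsto.1 hμs f using 2 with i
  exact (integral_map (hY i) f.continuous.aestronglyMeasurable).symm

lemma tendsto_rpow_self_nhdsGT_zero : Tendsto (fun a : ℝ ↦ a ^ a) (𝓝[>] 0) (𝓝 1) := by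
  have h : Tendsto (fun a : ℝ ↦ exp (a * log a)) (𝓝 0) (𝓝 1) :=
    (continuous_exp.comp continuous_mul_log).tendsto' 0 1 (by simp)
  refine (h.mono_left nhdsWithin_le_nhds).congr' ?_
  filter_upwards [self_mem_nhdsWithin] with a (ha : 0 < a)
  rw [rpow_def_of_pos ha, mul_comm]

lemma measureReal_Ioi_expMeasure {r : ℝ} (hr : 0 < r) (x : ℝ) :
    (expMeasure r).real (Ioi x) = exp (-(r * max x 0)) := by
  have := isProbabilityMeasure_expMeasure hr
  rw [← compl_Iic, probReal_compl_eq_one_sub measurableSet_Iic, ← cdf_eq_real,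
    cdf_expMeasure_eq hr]
  rcases le_or_gt 0 x with hx | hx
  · simp [hx]
  · simp [hx.le, hx.not_ge]

section Laplace

variable {Ω : Type*} [MeasurableSpace Ω] {P : Measure Ω} {X : Ω → ℝ} {l t : ℝ}

lemma integrable_exp_neg_mul [IsFiniteMeasure P] (hX : Measurable X)
    (hX₀ : ∀ᵐ ω ∂P, 0 ≤ X ω) (hl : 0 ≤ l) :
    Integrable (fun ω ↦ exp (-(l * X ω))) P := by
  refine (integrable_const 1).mono' (by fun_prop) ?_
  filter_upwards [hX₀] with ω hω
  simpa using mul_nonneg hl hω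

lemma measureReal_lt_le_exp_mul_integral_exp_neg_mul [IsFiniteMeasure P]
    (hint : Integrable (fun ω ↦ exp (-(l * X ω))) P) (hl : 0 ≤ l) :
    P.real {ω | X ω < t} ≤ exp (l * t) * ∫ ω, exp (-(l * X ω)) ∂P := by
  have hint' : Integrable (fun ω ↦ exp (l * (-X) ω)) P := by simpa using hint
  calc P.real {ω | X ω < t} ≤ P.real {ω | -t ≤ (-X) ω} :=
        measureReal_mono (fun ω (hω : X ω < t) ↦ by simp [hω.le]) (measure_ne_top _ _)
    _ ≤ exp (-l * -t) * mgf (-X) P l := measure_ge_le_exp_mul_mgf (-t) hl hint'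
    _ = exp (l * t) * ∫ ω, exp (-(l * X ω)) ∂P := by simp [mgf]

lemma integral_exp_neg_mul_le_measureReal_lt_add [IsProbabilityMeasure P] (hX : Measurable X)
    (hX₀ : ∀ᵐ ω ∂P, 0 ≤ X ω) (hl : 0 ≤ l) :
    ∫ ω, exp (-(l * X ω)) ∂P ≤ P.real {ω | X ω < t} + exp (-(l * t)) := by
  have hS : MeasurableSet {ω | X ω < t} := measurableSet_lt hX measurable_const
  have hbound : ∀ᵐ ω ∂P, exp (-(l * X ω)) ≤ {ω | X ω < t}.indicator 1 ω + exp (-(l * t)) := by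
    filter_upwards [hX₀] with ω hω
    by_cases hωt : X ω < t
    · have : exp (-(l * X ω)) ≤ 1 := by simpa using mul_nonneg hl hω
      simp only [indicator_of_mem (show ω ∈ {ω | X ω < t} from hωt), Pi.one_apply]
      linarith [exp_pos (-(l * t))]
    · rw [indicator_of_notMem (show ω ∉ {ω | X ω < t} from hωt), zero_add]
      gcongr
      exact not_lt.1 hωt
  calc ∫ ω, exp (-(l * X ω)) ∂P
      ≤ ∫ ω, ({ω | X ω < t}.indicator 1 ω + exp (-(l * t))) ∂P :=
        integral_mono_ae (integrable_exp_neg_mul hX hX₀ hl)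
          (((integrable_const 1).indicator hS).add (integrable_const _)) hbound
    _ = P.real {ω | X ω < t} + exp (-(l * t)) := by
        rw [integral_add ((integrable_const 1).indicator hS) (integrable_const _),
          integral_indicator_one hS]
        simp

end Laplace

lemma mul_rpow_inv_mul_rpow_neg_inv {x : ℝ} (hx : 0 < x) (c α : ℝ) :
    c * x ^ α⁻¹ * x ^ (-α)⁻¹ = c := by
  rw [inv_neg, mul_assoc, ← rpow_add hx, add_neg_cancel, rpow_zero, mul_one]

namespace IsPositiveStable

variable {Ω : Type*} [MeasurableSpace Ω] {P : Measure Ω} {α : ℝ} {X : Ω → ℝ} {x c : ℝ}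

lemma measureReal_lt_rpow_neg (h : IsPositiveStable P α X) (hα : 0 < α) (hx : 0 < x) :
    P.real {ω | x < X ω ^ (-α)} = P.real {ω | X ω < x ^ (-α)⁻¹} := by
  refine measureReal_congr ?_
  filter_upwards [h.1] with ω hω
  exact propext (lt_rpow_inv_iff_of_neg hω hx (neg_neg_of_pos hα)).symm

lemma integral_exp_neg_mul_rpow_inv_mul (h : IsPositiveStable P α X) (hα : 0 < α) (hx : 0 < x)
    (hc : 0 < c) :
    ∫ ω, exp (-(c * x ^ α⁻¹ * X ω)) ∂P = exp (-(c ^ α * x)) := by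
  rw [h.2 _ (by positivity), mul_rpow hc.le (by positivity), rpow_inv_rpow hx.le hα.ne']

variable [IsProbabilityMeasure P]

lemma measureReal_lt_rpow_neg_le (h : IsPositiveStable P α X) (hX : Measurable X) (hα : 0 < α)
    (hx : 0 < x) (hc : 0 < c) :
    P.real {ω | x < X ω ^ (-α)} ≤ exp c * exp (-(c ^ α * x)) := by
  have hl : 0 ≤ c * x ^ α⁻¹ := by positivity
  have hX₀ : ∀ᵐ ω ∂P, 0 ≤ X ω := h.1.mono fun _ ↦ le_of_lt
  have := measureReal_lt_le_exp_mul_integral_exp_neg_mul (t := x ^ (-α)⁻¹)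
    (integrable_exp_neg_mul hX hX₀ hl) hl
  rwa [mul_rpow_inv_mul_rpow_neg_inv hx, h.integral_exp_neg_mul_rpow_inv_mul hα hx hc,
    ← h.measureReal_lt_rpow_neg hα hx] at this

lemma le_measureReal_lt_rpow_neg (h : IsPositiveStable P α X) (hX : Measurable X) (hα : 0 < α)
    (hx : 0 < x) (hc : 0 < c) :
    exp (-(c ^ α * x)) - exp (-c) ≤ P.real {ω | x < X ω ^ (-α)} := by
  have := integral_exp_neg_mul_le_measureReal_lt_add (t := x ^ (-α)⁻¹) hX
    (h.1.mono fun _ ↦ le_of_lt) (by positivity : 0 ≤ c * x ^ α⁻¹)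
  rw [mul_rpow_inv_mul_rpow_neg_inv hx, h.integral_exp_neg_mul_rpow_inv_mul hα hx hc,
    ← h.measureReal_lt_rpow_neg hα hx] at this
  linarith

lemma measureReal_lt_rpow_neg_of_nonpos (h : IsPositiveStable P α X) (hx : x ≤ 0) :
    P.real {ω | x < X ω ^ (-α)} = 1 := by
  rw [← probReal_univ (μ := P)]
  refine measureReal_congr ?_
  filter_upwards [h.1] with ω hω
  exact propext (iff_of_true (hx.trans_lt (rpow_pos_of_pos hω _)) trivial)

end IsPositiveStable

lemma tendsto_measureReal_lt_rpow_neg {Ω : Type*} [MeasurableSpace Ω] {P : Measure Ω}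
    [IsProbabilityMeasure P] {X : ℝ → Ω → ℝ}
    (hXmeas : ∀ α ∈ Ioo (0 : ℝ) 1, Measurable (X α))
    (hXstab : ∀ α ∈ Ioo (0 : ℝ) 1, IsPositiveStable P α (X α)) (x : ℝ) :
    Tendsto (fun α ↦ P.real {ω | x < X α ω ^ (-α)}) (𝓝[>] 0)
      (𝓝 ((expMeasure 1).real (Ioi x))) := by
  have hIoo : Ioo (0 : ℝ) 1 ∈ 𝓝[>] 0 := Ioo_mem_nhdsGT one_pos
  rw [measureReal_Ioi_expMeasure one_pos, one_mul]
  rcases le_or_gt x 0 with hx | hx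
  · rw [max_eq_right hx, neg_zero, exp_zero]
    refine tendsto_const_nhds.congr' ?_
    filter_upwards [hIoo] with α hα
    exact ((hXstab α hα).measureReal_lt_rpow_neg_of_nonpos hx).symm
  rw [max_eq_left hx.le]
  have hpow : Tendsto (fun α : ℝ ↦ α ^ α) (𝓝[>] 0) (𝓝 1) := tendsto_rpow_self_nhdsGT_zero
  have hid : Tendsto (fun α : ℝ ↦ α) (𝓝[>] 0) (𝓝 0) := nhdsWithin_le_nhds
  have hlower : Tendsto (fun α : ℝ ↦ exp (-((α⁻¹) ^ α * x)) - exp (-α⁻¹)) (𝓝[>] 0)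
      (𝓝 (exp (-x))) := by
    have hinv : Tendsto (fun α : ℝ ↦ (α⁻¹) ^ α) (𝓝[>] 0) (𝓝 1) := by
      refine (by simpa using hpow.inv₀ one_ne_zero : Tendsto (fun α : ℝ ↦ (α ^ α)⁻¹) _ _).congr' ?_
      filter_upwards [self_mem_nhdsWithin] with α (h : 0 < α)
      rw [inv_rpow h.le]
    have := ((continuous_exp.tendsto _).comp (hinv.mul_const x).neg).sub
      (tendsto_exp_atBot.comp (tendsto_neg_atTop_atBot.comp tendsto_inv_nhdsGT_zero))
    simpa [Function.comp_def] using this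
  have hupper : Tendsto (fun α : ℝ ↦ exp α * exp (-(α ^ α * x))) (𝓝[>] 0) (𝓝 (exp (-x))) := by
    have := ((continuous_exp.tendsto _).comp hid).mul
      ((continuous_exp.tendsto _).comp (hpow.mul_const x).neg)
    simpa [Function.comp_def] using this
  refine tendsto_of_tendsto_of_tendsto_of_le_of_le' hlower hupper ?_ ?_ <;>
    filter_upwards [hIoo] with α hα
  · exact (hXstab α hα).le_measureReal_lt_rpow_neg (hXmeas α hα) hα.1 hx (inv_pos.2 hα.1)
  · exact (hXstab α hα).measureReal_lt_rpow_neg_le (hXmeas α hα) hα.1 hx hα.1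

/-- If, for each `α ∈ (0,1)`, `X α` is a positive strictly `α`-stable random variable, then
`(X α)^(-α)` converges in distribution to the `Exponential(1)` distribution as `α → 0⁺`. -/
theorem stable_neg_power_tendsto_exponential {Ω : Type*} [MeasurableSpace Ω]
    (P : Measure Ω) [IsProbabilityMeasure P]
    (X : ℝ → Ω → ℝ)
    (hXmeas : ∀ α ∈ Set.Ioo (0 : ℝ) 1, Measurable (X α))
    (hXstab : ∀ α ∈ Set.Ioo (0 : ℝ) 1, IsPositiveStable P α (X α)) :
    ∀ f : ℝ →ᵇ ℝ,
      Tendsto (fun α : ℝ => ∫ ω, f (X α ω ^ (-α)) ∂P)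
        (nhdsWithin 0 (Set.Ioi 0)) (nhds (∫ x, f x ∂(expMeasure 1))) := by
  intro f
  -- pass to the index type `Ioo 0 1`, on which every `X α ^ (-α)` is measurable
  have hrange : range (Subtype.val : Ioo (0 : ℝ) 1 → ℝ) ∈ 𝓝[>] 0 := by
    rw [Subtype.range_coe]
    exact Ioo_mem_nhdsGT one_pos
  rw [← tendsto_comap'_iff hrange]
  exact tendsto_integral_comp_of_tendsto_measureReal_lt
    (fun α : Ioo (0 : ℝ) 1 ↦ ((hXmeas α α.2).pow_const _).aemeasurable)
    ⟨expMeasure 1, isProbabilityMeasure_expMeasure one_pos⟩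
    (fun x ↦ (tendsto_measureReal_lt_rpow_neg hXmeas hXstab x).comp tendsto_comap) f
end

section
/- For each α ∈ (0,1), let X_α be a positive strictly α-stable random variable and let G_α(y) = P(X_α^α ≤ y) be the cumulative distribution function of X_α^α. Then G_α converges to the function y ↦ exp(-1/y) uniformly on (0,∞) as α → 0⁺, i.e., sup_{y>0} |G_α(y) - exp(-1/y)| → 0 as α → 0⁺. -/
open MeasureTheory ProbabilityTheory Filter

/-!
Evaluating the Laplace transform of `X = X_α` at `λ = (s / y) ^ (1/α)` and splitting the
expectation along the event `{X ≤ y ^ (1/α)} = {X ^ α ≤ y}` gives, for all `s, y > 0`,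
`exp (-s/y) - exp (-s ^ (1/α)) ≤ G_α(y) ≤ exp (s ^ (1/α)) * exp (-s/y)`.
Taking `s = t > 1` in the lower bound and `s = 1/t < 1` in the upper bound, the error terms
`exp (-t ^ (1/α))` and `exp ((1/t) ^ (1/α)) - 1` vanish as `α → 0⁺`, while
`y ↦ exp (-s/y)` stays within `t - 1` of `y ↦ exp (-1/y)` uniformly in `y`.
-/

open Real Set Topology

lemma exp_neg_div_sub_exp_neg_div_le {a b y : ℝ} (ha : 0 < a) (hab : a ≤ b) (hy : 0 < y) :
    exp (-(a / y)) - exp (-(b / y)) ≤ b / a - 1 := by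
  have hsplit : exp (-(b / y)) = exp (-(a / y)) * exp (-((b - a) / y)) := by
    rw [← exp_add]; ring_nf
  have hmul : a / y * exp (-(a / y)) ≤ 1 :=
    (mul_exp_neg_le_exp_neg_one _).trans (exp_le_one_iff.2 (by norm_num))
  calc exp (-(a / y)) - exp (-(b / y))
      = exp (-(a / y)) * (1 - exp (-((b - a) / y))) := by rw [hsplit]; ring
    _ ≤ exp (-(a / y)) * ((b - a) / y) := by
        gcongr; linarith [one_sub_le_exp_neg ((b - a) / y)]
    _ = (b / a - 1) * (a / y * exp (-(a / y))) := by field_simp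
    _ ≤ b / a - 1 :=
        mul_le_of_le_one_right (by rw [sub_nonneg, le_div_iff₀ ha]; linarith) hmul

lemma div_rpow_mul_rpow {s y : ℝ} (hs : 0 ≤ s) (hy : 0 < y) (r : ℝ) :
    (s / y) ^ r * y ^ r = s ^ r := by
  rw [← mul_rpow (div_nonneg hs hy.le) hy.le, div_mul_cancel₀ _ hy.ne']

section LaplaceBounds

variable {Ω : Type*} [MeasurableSpace Ω] {P : Measure Ω} {X : Ω → ℝ} {l : ℝ}

lemma integrable_exp_neg_mul_of_nonneg [IsFiniteMeasure P] (hXm : AEMeasurable X P)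
    (hX : ∀ᵐ ω ∂P, 0 ≤ X ω) (hl : 0 ≤ l) :
    Integrable (fun ω => exp (-(l * X ω))) P := by
  refine Integrable.mono' (integrable_const 1) (by fun_prop) ?_
  filter_upwards [hX] with ω hω
  rw [norm_of_nonneg (exp_pos _).le, exp_le_one_iff, neg_nonpos]
  exact mul_nonneg hl hω

lemma measureReal_le_exp_mul_integral_exp_neg_mul [IsFiniteMeasure P] (hXm : AEMeasurable X P)
    (hX : ∀ᵐ ω ∂P, 0 ≤ X ω) (hl : 0 ≤ l) (m : ℝ) :
    P.real {ω | X ω ≤ m} ≤ exp (l * m) * ∫ ω, exp (-(l * X ω)) ∂P := by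
  have h := measure_le_le_exp_mul_mgf m (neg_nonpos.2 hl)
    (by simpa only [neg_mul] using integrable_exp_neg_mul_of_nonneg hXm hX hl)
  simpa only [mgf, neg_neg, neg_mul] using h

lemma integral_exp_neg_mul_le_measureReal_add [IsProbabilityMeasure P] (hXm : Measurable X)
    (hX : ∀ᵐ ω ∂P, 0 ≤ X ω) (hl : 0 ≤ l) (m : ℝ) :
    ∫ ω, exp (-(l * X ω)) ∂P ≤ P.real {ω | X ω ≤ m} + exp (-(l * m)) := by
  have hB : MeasurableSet {ω | X ω ≤ m} := hXm measurableSet_Iic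
  have hbound : ∀ᵐ ω ∂P,
      exp (-(l * X ω)) ≤ {ω | X ω ≤ m}.indicator 1 ω + exp (-(l * m)) := by
    filter_upwards [hX] with ω hω
    by_cases hωm : X ω ≤ m
    · rw [indicator_of_mem (show ω ∈ {ω | X ω ≤ m} from hωm), Pi.one_apply]
      have : exp (-(l * X ω)) ≤ 1 := exp_le_one_iff.2 (by nlinarith)
      linarith [exp_pos (-(l * m))]
    · rw [indicator_of_notMem (show ω ∉ {ω | X ω ≤ m} from hωm), zero_add, exp_le_exp,
        neg_le_neg_iff]
      exact mul_le_mul_of_nonneg_left (not_le.1 hωm).le hl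
  calc ∫ ω, exp (-(l * X ω)) ∂P
      ≤ ∫ ω, ({ω | X ω ≤ m}.indicator 1 ω + exp (-(l * m))) ∂P :=
        integral_mono_ae (integrable_exp_neg_mul_of_nonneg hXm.aemeasurable hX hl)
          (((integrable_const 1).indicator hB).add (integrable_const _)) hbound
    _ = P.real {ω | X ω ≤ m} + exp (-(l * m)) := by
        rw [integral_add ((integrable_const 1).indicator hB) (integrable_const _),
          integral_indicator_one hB, integral_const, probReal_univ, one_smul]

end LaplaceBounds

namespace IsPositiveStable

variable {Ω : Type*} [MeasurableSpace Ω] {P : Measure Ω} {α : ℝ} {X : Ω → ℝ} {s y : ℝ}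

lemma nonneg (hX : IsPositiveStable P α X) : ∀ᵐ ω ∂P, 0 ≤ X ω := by
  filter_upwards [hX.1] with ω hω using hω.le

lemma measureReal_rpow_le (hX : IsPositiveStable P α X) (hα : 0 < α) (hy : 0 ≤ y) :
    P.real {ω | X ω ^ α ≤ y} = P.real {ω | X ω ≤ y ^ α⁻¹} := by
  refine measureReal_congr (eventuallyEq_set.2 ?_)
  filter_upwards [hX.1] with ω hω
  exact (le_rpow_inv_iff_of_pos hω.le hy hα).symm

lemma integral_exp_neg_rpow_inv_mul (hX : IsPositiveStable P α X) (hα : 0 < α)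
    (hs : 0 < s) (hy : 0 < y) :
    ∫ ω, exp (-((s / y) ^ α⁻¹ * X ω)) ∂P = exp (-(s / y)) := by
  rw [hX.2 _ (by positivity), ← rpow_mul (by positivity), inv_mul_cancel₀ hα.ne', rpow_one]

lemma exp_neg_div_sub_le_measureReal [IsProbabilityMeasure P] (hX : IsPositiveStable P α X)
    (hXm : Measurable X) (hα : 0 < α) (hs : 0 < s) (hy : 0 < y) :
    exp (-(s / y)) - exp (-(s ^ α⁻¹)) ≤ P.real {ω | X ω ^ α ≤ y} := by
  have h := integral_exp_neg_mul_le_measureReal_add hXm hX.nonneg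
    (l := (s / y) ^ α⁻¹) (by positivity) (y ^ α⁻¹)
  rw [integral_exp_neg_rpow_inv_mul hX hα hs hy, div_rpow_mul_rpow hs.le hy] at h
  rw [hX.measureReal_rpow_le hα hy.le]
  linarith

lemma measureReal_le_exp_mul_exp_neg_div [IsFiniteMeasure P] (hX : IsPositiveStable P α X)
    (hXm : AEMeasurable X P) (hα : 0 < α) (hs : 0 < s) (hy : 0 < y) :
    P.real {ω | X ω ^ α ≤ y} ≤ exp (s ^ α⁻¹) * exp (-(s / y)) := by
  have h := measureReal_le_exp_mul_integral_exp_neg_mul hXm hX.nonneg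
    (l := (s / y) ^ α⁻¹) (by positivity) (y ^ α⁻¹)
  rwa [integral_exp_neg_rpow_inv_mul hX hα hs hy, div_rpow_mul_rpow hs.le hy,
    ← hX.measureReal_rpow_le hα hy.le] at h

lemma abs_measureReal_rpow_le_sub_exp_le [IsProbabilityMeasure P] (hX : IsPositiveStable P α X)
    (hXm : Measurable X) (hα : 0 < α) {t : ℝ} (ht : 1 < t) (hy : 0 < y) :
    |P.real {ω | X ω ^ α ≤ y} - exp (-1 / y)|
      ≤ t - 1 + (exp (t⁻¹ ^ α⁻¹) - 1) + exp (-(t ^ α⁻¹)) := by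
  have ht₀ : 0 < t := one_pos.trans ht
  have hlower := hX.exp_neg_div_sub_le_measureReal hXm hα ht₀ hy
  have hupper :=
    hX.measureReal_le_exp_mul_exp_neg_div hXm.aemeasurable hα (inv_pos.2 ht₀) hy
  have hclose_above := exp_neg_div_sub_exp_neg_div_le one_pos ht.le hy
  have hclose_below :=
    exp_neg_div_sub_exp_neg_div_le (inv_pos.2 ht₀) (inv_le_one_of_one_le₀ ht.le) hy
  rw [div_one] at hclose_above
  rw [div_inv_eq_mul, one_mul] at hclose_below
  have hexp_le_one : exp (-(t⁻¹ / y)) ≤ 1 :=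
    exp_le_one_iff.2 (by simp only [neg_nonpos]; positivity)
  have hexp_ge_one : 1 ≤ exp (t⁻¹ ^ α⁻¹) := one_le_exp (by positivity)
  have hfactor : exp (t⁻¹ ^ α⁻¹) * exp (-(t⁻¹ / y))
      ≤ exp (-(t⁻¹ / y)) + (exp (t⁻¹ ^ α⁻¹) - 1) := by
    nlinarith
  have htail_pos := exp_pos (-(t ^ α⁻¹))
  rw [neg_div, abs_le]
  constructor <;> linarith

end IsPositiveStable

lemma tendsto_stable_error_bound {t : ℝ} (ht : 1 < t) :
    Tendsto (fun α : ℝ => t - 1 + (exp (t⁻¹ ^ α⁻¹) - 1) + exp (-(t ^ α⁻¹)))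
      (𝓝[>] 0) (𝓝 (t - 1)) := by
  have hsmall : Tendsto (fun α : ℝ => t⁻¹ ^ α⁻¹) (𝓝[>] 0) (𝓝 0) :=
    (tendsto_rpow_atTop_of_base_lt_one _ (by linarith [inv_pos.2 (one_pos.trans ht)])
      (inv_lt_one_of_one_lt₀ ht)).comp tendsto_inv_nhdsGT_zero
  have hlarge : Tendsto (fun α : ℝ => t ^ α⁻¹) (𝓝[>] 0) atTop :=
    (tendsto_rpow_atTop_of_base_gt_one _ ht).comp tendsto_inv_nhdsGT_zero
  have h := ((tendsto_const_nhds (x := t - 1)).add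
    (((continuous_exp.tendsto 0).comp hsmall).sub_const 1)).add
    (tendsto_exp_neg_atTop_nhds_zero.comp hlarge)
  simpa using h

/-- If, for each `α ∈ (0,1)`, `X α` is positive strictly `α`-stable with
`G_α(y) = P((X α)^α ≤ y)`, then `G_α` converges to `y ↦ exp (-1/y)` uniformly on `(0,∞)`
as `α → 0⁺`. -/
theorem stable_power_cdf_tendsto_uniformly {Ω : Type*} [MeasurableSpace Ω]
    (P : Measure Ω) [IsProbabilityMeasure P]
    (X : ℝ → Ω → ℝ)
    (hXmeas : ∀ α ∈ Set.Ioo (0 : ℝ) 1, Measurable (X α))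
    (hXstab : ∀ α ∈ Set.Ioo (0 : ℝ) 1, IsPositiveStable P α (X α)) :
    TendstoUniformlyOn
      (fun (α : ℝ) (y : ℝ) => (P {ω | X α ω ^ α ≤ y}).toReal)
      (fun y : ℝ => Real.exp (-1 / y))
      (nhdsWithin 0 (Set.Ioi 0)) (Set.Ioi 0) := by
  rw [Metric.tendstoUniformlyOn_iff]
  intro ε hε
  have ht : 1 < 1 + ε / 2 := by linarith
  have herror :=
    (tendsto_stable_error_bound ht).eventually_lt_const (by linarith : 1 + ε / 2 - 1 < ε)
  filter_upwards [herror, Ioo_mem_nhdsGT one_pos] with α hsmall hα y hy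
  rw [dist_comm, Real.dist_eq]
  exact ((hXstab α hα).abs_measureReal_rpow_le_sub_exp_le (hXmeas α hα) hα.1 ht hy).trans_lt
    hsmall
end

section
/- Let c be a positive integer. For each α ∈ (0,1), let X_{α,1}, ..., X_{α,c} be i.i.d. positive strictly α-stable random variables, let M_α = max_{1 ≤ i ≤ c} X_{α,i}^α, and let G_α(y) = P(X_α^α ≤ y) denote the cumulative distribution function of X_α^α. Then log G_α(M_α) + 1/M_α converges to 0 in probability as α → 0⁺. -/
/-!
The Laplace transform gives Chernoff-type bounds on `G_α(y) = P(X ≤ y^(1/α))`: for every `k ≥ 0`,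
`exp (-k) - exp (-(k y)^(1/α)) ≤ G_α(y) ≤ exp ((k y)^(1/α) - k)`. Taking `k = (1 ± θ)/y` and
letting `α → 0⁺`, the terms `(1 ± θ)^(1/α)` tend to `∞` and `0`, so `log G_α(y) + 1/y → 0`
uniformly in `y ≥ a`, for each `a > 0` (the law of `X^α` tends to the Fréchet law `exp (-1/y)`).
The deviation `|log G_α(M_α) + 1/M_α|` can therefore only be large when `M_α < a`, an event of
probability at most `G_α(a) ≤ exp (1 - 1/a)`, which is small for small `a`.
-/

open MeasureTheory ProbabilityTheory Filter

open Real Set Topology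

section

variable {Ω : Type*} [MeasurableSpace Ω] {P : Measure Ω}

section

variable {α : ℝ} {X : Ω → ℝ}

lemma measureReal_rpow_le_eq_measureReal_le_rpow_inv (hpos : ∀ᵐ ω ∂P, 0 < X ω) (hα : 0 < α)
    {y : ℝ} (hy : 0 ≤ y) :
    P.real {ω | X ω ^ α ≤ y} = P.real {ω | X ω ≤ y ^ α⁻¹} := by
  refine measureReal_congr (eventuallyEq_set.2 ?_)
  filter_upwards [hpos] with ω hω
  exact (le_rpow_inv_iff_of_pos hω.le hy hα).symm

namespace IsPositiveStable

lemma integrable_exp_neg_mul (h : IsPositiveStable P α X) {l : ℝ} (hl : 0 ≤ l) :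
    Integrable (fun ω => exp (-(l * X ω))) P :=
  Integrable.of_integral_ne_zero <| by rw [h.2 l hl]; exact (exp_pos _).ne'

lemma measureReal_le_le [IsFiniteMeasure P] (h : IsPositiveStable P α X) (t : ℝ) {l : ℝ}
    (hl : 0 ≤ l) : P.real {ω | X ω ≤ t} ≤ exp (l * t - l ^ α) := by
  have hchernoff := measure_le_le_exp_mul_mgf t (neg_nonpos.2 hl)
    (by simpa only [neg_mul] using h.integrable_exp_neg_mul hl)
  simp only [mgf, neg_mul, neg_neg, h.2 l hl] at hchernoff
  rwa [sub_eq_add_neg, exp_add]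

lemma exp_sub_le_measureReal_le [IsProbabilityMeasure P] (h : IsPositiveStable P α X)
    (hX : Measurable X) (t : ℝ) {l : ℝ} (hl : 0 ≤ l) :
    exp (-l ^ α) - exp (-(l * t)) ≤ P.real {ω | X ω ≤ t} := by
  have hs : MeasurableSet {ω | X ω ≤ t} := hX measurableSet_Iic
  have hbound : ∀ᵐ ω ∂P, exp (-(l * X ω)) ≤ {ω | X ω ≤ t}.indicator 1 ω + exp (-(l * t)) := by
    filter_upwards [h.1] with ω hω
    by_cases hωt : X ω ≤ t
    · have : exp (-(l * X ω)) ≤ 1 := exp_le_one_iff.2 (by nlinarith)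
      simp only [indicator_of_mem (show ω ∈ {ω | X ω ≤ t} from hωt), Pi.one_apply]
      linarith [exp_pos (-(l * t))]
    · rw [indicator_of_notMem (show ω ∉ {ω | X ω ≤ t} from hωt), zero_add]
      exact exp_le_exp.2 (by nlinarith)
  have hint := integral_mono_ae (h.integrable_exp_neg_mul hl)
    (((integrable_const 1).indicator hs).add (integrable_const _)) hbound
  rw [h.2 l hl, integral_add' ((integrable_const 1).indicator hs) (integrable_const _),
    integral_indicator_one hs, integral_const, probReal_univ, one_smul] at hint
  linarith

lemma measureReal_rpow_le_le [IsFiniteMeasure P] (h : IsPositiveStable P α X) (hα : 0 < α)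
    {y k : ℝ} (hy : 0 ≤ y) (hk : 0 ≤ k) :
    P.real {ω | X ω ^ α ≤ y} ≤ exp ((k * y) ^ α⁻¹ - k) := by
  rw [measureReal_rpow_le_eq_measureReal_le_rpow_inv h.1 hα hy]
  convert h.measureReal_le_le (y ^ α⁻¹) (rpow_nonneg hk α⁻¹) using 2
  rw [mul_rpow hk hy, rpow_inv_rpow hk hα.ne']

lemma exp_sub_le_measureReal_rpow_le [IsProbabilityMeasure P] (h : IsPositiveStable P α X)
    (hX : Measurable X) (hα : 0 < α) {y k : ℝ} (hy : 0 ≤ y) (hk : 0 ≤ k) :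
    exp (-k) - exp (-(k * y) ^ α⁻¹) ≤ P.real {ω | X ω ^ α ≤ y} := by
  rw [measureReal_rpow_le_eq_measureReal_le_rpow_inv h.1 hα hy]
  convert h.exp_sub_le_measureReal_le hX (y ^ α⁻¹) (rpow_nonneg hk α⁻¹) using 4
  · rw [rpow_inv_rpow hk hα.ne']
  · rw [mul_rpow hk hy]

end IsPositiveStable

end

variable [IsProbabilityMeasure P]

theorem eventually_measureReal_rpow_le_le_exp {a ε : ℝ} (ha : 0 < a) (hε : 0 < ε) :
    ∀ᶠ α in 𝓝[>] (0 : ℝ), ∀ X : Ω → ℝ, IsPositiveStable P α X → ∀ y, a ≤ y →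
      P.real {ω | X ω ^ α ≤ y} ≤ exp (-(1 / y) + ε) := by
  set θ := min 1 (a * ε / 2)
  have hθ : 0 < θ := lt_min one_pos (by positivity)
  have hθa : θ / a ≤ ε / 2 := (div_le_iff₀' ha).2 (by linarith [min_le_right 1 (a * ε / 2)])
  have hsmall : ∀ᶠ α in 𝓝[>] (0 : ℝ), (1 - θ) ^ α⁻¹ ≤ ε / 2 :=
    ((tendsto_rpow_atTop_of_base_lt_one _ (by linarith [min_le_left 1 (a * ε / 2)])
      (by linarith)).comp tendsto_inv_nhdsGT_zero).eventually_le_const (half_pos hε)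
  filter_upwards [self_mem_nhdsWithin, hsmall] with α (hα : 0 < α) hpow X hX y hy
  have hy0 : 0 < y := ha.trans_le hy
  have hθy : θ / y ≤ θ / a := div_le_div_of_nonneg_left hθ.le ha hy
  calc P.real {ω | X ω ^ α ≤ y} ≤ exp (((1 - θ) / y * y) ^ α⁻¹ - (1 - θ) / y) :=
        hX.measureReal_rpow_le_le hα hy0.le
          (div_nonneg (sub_nonneg.2 (min_le_left _ _)) hy0.le)
    _ ≤ exp (-(1 / y) + ε) := by
        rw [div_mul_cancel₀ _ hy0.ne', sub_div]
        gcongr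
        linarith

theorem eventually_exp_le_measureReal_rpow_le {a ε : ℝ} (ha : 0 < a) (hε : 0 < ε) :
    ∀ᶠ α in 𝓝[>] (0 : ℝ), ∀ X : Ω → ℝ, IsPositiveStable P α X → Measurable X → ∀ y, a ≤ y →
      exp (-(1 / y) - ε) ≤ P.real {ω | X ω ^ α ≤ y} := by
  set θ := a * ε / 2
  have hθ : 0 < θ := by positivity
  have hθa : θ / a = ε / 2 := by simp only [θ]; field_simp
  have hdiff : 0 < exp (-(θ / a)) - exp (-ε) := sub_pos.2 (exp_lt_exp.2 (by linarith))
  set gap := exp (-(1 / a)) * (exp (-(θ / a)) - exp (-ε))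
  have hgap : 0 < gap := mul_pos (exp_pos _) hdiff
  have hsmall : ∀ᶠ α in 𝓝[>] (0 : ℝ), exp (-(1 + θ) ^ α⁻¹) ≤ gap :=
    (tendsto_exp_atBot.comp (tendsto_neg_atTop_atBot.comp
      ((tendsto_rpow_atTop_of_base_gt_one _ (by linarith)).comp
        tendsto_inv_nhdsGT_zero))).eventually_le_const hgap
  filter_upwards [self_mem_nhdsWithin, hsmall] with α (hα : 0 < α) hpow X hX hXm y hy
  have hy0 : 0 < y := ha.trans_le hy
  have hgap_le : gap ≤ exp (-((1 + θ) / y)) - exp (-(1 / y) - ε) := by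
    have hsplit : exp (-((1 + θ) / y)) - exp (-(1 / y) - ε)
        = exp (-(1 / y)) * (exp (-(θ / y)) - exp (-ε)) := by
      rw [mul_sub, ← exp_add, ← exp_add, add_div]; ring_nf
    rw [hsplit]
    have hθy : θ / y ≤ θ / a := div_le_div_of_nonneg_left hθ.le ha hy
    exact mul_le_mul (exp_le_exp.2 (neg_le_neg (one_div_le_one_div_of_le ha hy)))
      (sub_le_sub_right (exp_le_exp.2 (neg_le_neg hθy)) _) hdiff.le (exp_pos _).le
  calc exp (-(1 / y) - ε) ≤ exp (-((1 + θ) / y)) - exp (-((1 + θ) / y * y) ^ α⁻¹) := by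
        rw [div_mul_cancel₀ _ hy0.ne']; linarith
    _ ≤ P.real {ω | X ω ^ α ≤ y} :=
        hX.exp_sub_le_measureReal_rpow_le hXm hα hy0.le (by positivity)

theorem eventually_abs_log_measureReal_rpow_le_add_inv_le {a ε : ℝ} (ha : 0 < a) (hε : 0 < ε) :
    ∀ᶠ α in 𝓝[>] (0 : ℝ), ∀ X : Ω → ℝ, IsPositiveStable P α X → Measurable X → ∀ y, a ≤ y →
      |log (P.real {ω | X ω ^ α ≤ y}) + 1 / y| ≤ ε := by
  filter_upwards [eventually_exp_le_measureReal_rpow_le (P := P) ha hε,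
    eventually_measureReal_rpow_le_le_exp (P := P) ha hε] with α hlower hupper X hX hXm y hy
  have hpos := (exp_pos _).trans_le (hlower X hX hXm y hy)
  rw [abs_le]
  constructor
  · linarith [(le_log_iff_exp_le hpos).2 (hlower X hX hXm y hy)]
  · linarith [(log_le_iff_le_exp hpos).2 (hupper X hX y hy)]

end

theorem log_cdf_max_tendsto_zero_general {Ω : Type*} [MeasurableSpace Ω]
    (P : Measure Ω) [IsProbabilityMeasure P]
    (c : ℕ) (hc : 0 < c)
    (X : ℝ → Fin c → Ω → ℝ) (X₀ : ℝ → Ω → ℝ)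
    (hX₀meas : ∀ α ∈ Set.Ioo (0 : ℝ) 1, Measurable (X₀ α))
    (hXstab : ∀ α ∈ Set.Ioo (0 : ℝ) 1, ∀ i, IsPositiveStable P α (X α i))
    (hX₀stab : ∀ α ∈ Set.Ioo (0 : ℝ) 1, IsPositiveStable P α (X₀ α)) :
    ∀ δ : ℝ, 0 < δ →
      Tendsto
        (fun α : ℝ => P {ω | δ ≤
          |Real.log ((P {ω' | X₀ α ω' ^ α ≤
              Finset.univ.sup' (Finset.univ_nonempty_iff.mpr (Fin.pos_iff_nonempty.mp hc))
                (fun i => X α i ω ^ α)}).toReal) +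
            1 / Finset.univ.sup' (Finset.univ_nonempty_iff.mpr (Fin.pos_iff_nonempty.mp hc))
                (fun i => X α i ω ^ α)|})
        (nhdsWithin 0 (Set.Ioi 0)) (nhds 0) := by
  intro δ hδ
  refine ENNReal.tendsto_nhds_zero.2 fun η hη => ?_
  -- For small `α`, `exp (-(1 / a) + 1)` bounds `P ((X α i)^α ≤ a)`.
  obtain ⟨a, haη, ha⟩ : ∃ a, ENNReal.ofReal (exp (-(1 / a) + 1)) ≤ η ∧ 0 < a := by
    have hlim : Tendsto (fun a : ℝ => ENNReal.ofReal (exp (-(1 / a) + 1))) (𝓝[>] 0) (𝓝 0) := by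
      refine ENNReal.ofReal_zero ▸ (ENNReal.continuous_ofReal.tendsto 0).comp
        (tendsto_exp_atBot.comp (tendsto_atBot_add_const_right _ 1
          (tendsto_neg_atTop_atBot.comp ?_)))
      simpa only [← one_div] using tendsto_inv_nhdsGT_zero (𝕜 := ℝ)
    exact ((hlim.eventually (ge_mem_nhds hη)).and self_mem_nhdsWithin).exists
  let i₀ : Fin c := ⟨0, hc⟩
  filter_upwards [Ioo_mem_nhdsGT (one_pos (α := ℝ)),
    eventually_abs_log_measureReal_rpow_le_add_inv_le (P := P) ha (half_pos hδ),
    eventually_measureReal_rpow_le_le_exp (P := P) ha one_pos] with α hα hlog htail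
  calc _ ≤ P {ω | X α i₀ ω ^ α ≤ a} := measure_mono fun ω hω => ?_
    _ = ENNReal.ofReal (P.real {ω | X α i₀ ω ^ α ≤ a}) := (ofReal_measureReal).symm
    _ ≤ ENNReal.ofReal (exp (-(1 / a) + 1)) :=
        ENNReal.ofReal_le_ofReal (htail _ (hXstab α hα i₀) a le_rfl)
    _ ≤ η := haη
  by_contra hi₀
  replace hi₀ : a < X α i₀ ω ^ α := not_le.1 hi₀
  have hM := hi₀.le.trans (Finset.le_sup' (fun i => X α i ω ^ α) (Finset.mem_univ i₀))
  exact (hlog _ (hX₀stab α hα) (hX₀meas α hα) _ hM).not_gt (half_lt_self hδ |>.trans_le hω)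

/-- For i.i.d. positive strictly `α`-stable `X α 1, …, X α c`, with
`M_α = max_i (X α i)^α` and `G_α` the CDF of `(X α)^α` (here computed from a generic copy
`X₀ α`), the quantity `log G_α(M_α) + 1 / M_α` converges to `0` in probability as `α → 0⁺`. -/
theorem log_cdf_max_tendsto_zero {Ω : Type*} [MeasurableSpace Ω]
    (P : Measure Ω) [IsProbabilityMeasure P]
    (c : ℕ) (hc : 0 < c)
    (X : ℝ → Fin c → Ω → ℝ) (X₀ : ℝ → Ω → ℝ)
    (hXmeas : ∀ α ∈ Set.Ioo (0 : ℝ) 1, ∀ i, Measurable (X α i))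
    (hX₀meas : ∀ α ∈ Set.Ioo (0 : ℝ) 1, Measurable (X₀ α))
    (hXindep : ∀ α ∈ Set.Ioo (0 : ℝ) 1, iIndepFun (X α) P)
    (hXstab : ∀ α ∈ Set.Ioo (0 : ℝ) 1, ∀ i, IsPositiveStable P α (X α i))
    (hX₀stab : ∀ α ∈ Set.Ioo (0 : ℝ) 1, IsPositiveStable P α (X₀ α)) :
    ∀ δ : ℝ, 0 < δ →
      Tendsto
        (fun α : ℝ => P {ω | δ ≤
          |Real.log ((P {ω' | X₀ α ω' ^ α ≤
              Finset.univ.sup' (Finset.univ_nonempty_iff.mpr (Fin.pos_iff_nonempty.mp hc))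
                (fun i => X α i ω ^ α)}).toReal) +
            1 / Finset.univ.sup' (Finset.univ_nonempty_iff.mpr (Fin.pos_iff_nonempty.mp hc))
                (fun i => X α i ω ^ α)|})
        (nhdsWithin 0 (Set.Ioi 0)) (nhds 0) :=
  log_cdf_max_tendsto_zero_general P c hc X X₀ hX₀meas hXstab hX₀stab
end
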